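/- arXiv:1911.03273 — 5 statements merged into one kernel-verified Lean document; each statement's English description precedes it below -/
import Mathlib

section
/- Assume (Hg) and (HΦ). Then for any q₀ ∈ (0,a) and q₁ ∈ (0,1−a) there exist constants μ > 0 and C ≥ 1 such that the functions u⁺_{i,j}(t) = Φ(i − ct + Cq₀(1 − e^{−μt})) + q₀e^{−μt} and u⁻_{i,j}(t) = Φ(i − ct − Cq₁(1 − e^{−μt})) − q₁e^{−μt} are, respectively, a super-solution and a sub-solution of the discrete Allen–Cahn equation on [0,∞). -/
/-!
Differentiating the wave equation gives `c ψ' ≤ M ψ` for `ψ = Φ' ≥ 0`, because the neighbour terms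
`ψ (ξ ± 1)` are nonnegative; by Grönwall a zero of `ψ` would spread to a half-line, against strict
monotonicity, so `Φ' > 0`.

For `u = Φ (ξ t) + q e^{-μt}` with `ξ t = i - c t + C q (1 - e^{-μt})`, the wave equation turns
the residual into `q e^{-μt} (C μ Φ' (ξ t) - μ - σ)`, where `σ` is the slope of `g` between
`Φ (ξ t)` and `Φ (ξ t) + q e^{-μt}`; the sub-solution is the case `q < 0`. Where `Φ` is close to the stable zeros
`0, 1` of `g`, this slope is at most some `-β < 0`, so `μ = β` works there. Elsewhere `Φ' ≥ m > 0`
and the slope is at most the Lipschitz constant `L` of `g`, which is absorbed by `C μ m ≥ μ + L`.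
-/

open Filter Topology MeasureTheory Set

noncomputable section

/-- Right-hand side of the discrete Allen-Cahn equation on `ℤ²`. -/
def acRHS (g : ℝ → ℝ) (w : ℤ → ℤ → ℝ) (i j : ℤ) : ℝ :=
  w (i + 1) j + w (i - 1) j + w i (j + 1) + w i (j - 1) - 4 * w i j + g (w i j)

/-- The putative super-solution `u⁺`. -/
def uPlus (Φ : ℝ → ℝ) (c C q μ : ℝ) (t : ℝ) (i : ℤ) (_j : ℤ) : ℝ :=
  Φ ((i : ℝ) - c * t + C * q * (1 - Real.exp (-μ * t))) + q * Real.exp (-μ * t)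

/-- The putative sub-solution `u⁻`. -/
def uMinus (Φ : ℝ → ℝ) (c C q μ : ℝ) (t : ℝ) (i : ℤ) (_j : ℤ) : ℝ :=
  Φ ((i : ℝ) - c * t - C * q * (1 - Real.exp (-μ * t))) - q * Real.exp (-μ * t)

/-- The acResidual `J[w] = ẇ − Δ⁺w − g(w)` of the discrete Allen-Cahn equation. -/
def acResidual (g : ℝ → ℝ) (w : ℝ → ℤ → ℤ → ℝ) (i j : ℤ) (t : ℝ) : ℝ :=
  deriv (fun s => w s i j) t -
    (w t (i + 1) j + w t (i - 1) j + w t i (j + 1) + w t i (j - 1) - 4 * w t i j) -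
    g (w t i j)

lemma eq_zero_of_hasDerivAt_le_mul_self {ψ ψ' : ℝ → ℝ} {K x₀ : ℝ}
    (hψ : ∀ x, HasDerivAt ψ (ψ' x) x) (hnonneg : ∀ x, 0 ≤ ψ x) (hK : ∀ x, ψ' x ≤ K * ψ x)
    (hx₀ : ψ x₀ = 0) {x : ℝ} (hx : x₀ ≤ x) : ψ x = 0 := by
  refine le_antisymm ?_ (hnonneg x)
  calc ψ x ≤ gronwallBound 0 K 0 (x - x₀) :=
        le_gronwallBound_of_liminf_deriv_right_le
          (continuous_iff_continuousAt.2 fun y => (hψ y).continuousAt).continuousOn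
          (fun y _ r hr => (hψ y).hasDerivWithinAt.liminf_right_slope_le hr) hx₀.le
          (fun y _ => by simpa using hK y) x ⟨hx, le_rfl⟩
    _ = 0 := gronwallBound_ε0_δ0 K _

lemma eq_zero_of_neg_mul_self_le_hasDerivAt {ψ ψ' : ℝ → ℝ} {K x₀ : ℝ}
    (hψ : ∀ x, HasDerivAt ψ (ψ' x) x) (hnonneg : ∀ x, 0 ≤ ψ x) (hK : ∀ x, -K * ψ x ≤ ψ' x)
    (hx₀ : ψ x₀ = 0) {x : ℝ} (hx : x ≤ x₀) : ψ x = 0 := by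
  have hrefl : ∀ y, HasDerivAt (fun y => ψ (-y)) (-ψ' (-y)) y := fun y => by
    simpa using (hψ (0 - y)).comp_const_sub 0 y
  simpa using eq_zero_of_hasDerivAt_le_mul_self (K := K) hrefl (fun y => hnonneg (-y))
    (fun y => by linarith [hK (-y)]) (by simpa using hx₀) (neg_le_neg hx)

lemma StrictMono.exists_deriv_pos {Φ : ℝ → ℝ} (hΦ : StrictMono Φ) (hd : Differentiable ℝ Φ)
    {u v : ℝ} (huv : u < v) : ∃ z ∈ Ioo u v, 0 < deriv Φ z := by
  obtain ⟨z, hz, hslope⟩ := exists_deriv_eq_slope Φ huv hd.continuous.continuousOn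
    hd.differentiableOn
  exact ⟨z, hz, hslope ▸ div_pos (sub_pos.2 (hΦ huv)) (sub_pos.2 huv)⟩

lemma LipschitzOnWith.abs_slope_le {f : ℝ → ℝ} {K : NNReal} {s : Set ℝ}
    (hf : LipschitzOnWith K f s) {x y : ℝ} (hx : x ∈ s) (hy : y ∈ s) :
    |slope f x y| ≤ K := by
  rcases eq_or_ne x y with rfl | hxy
  · simp
  rw [slope_def_field, abs_div, div_le_iff₀ (abs_pos.2 (sub_ne_zero.2 hxy.symm))]
  simpa [Real.dist_eq] using hf.dist_le_mul y hy x hx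

lemma exists_slope_le_neg_of_deriv_neg_right {f : ℝ → ℝ} (hf : ContDiff ℝ 1 f) {x₀ b q : ℝ}
    (hfx₀ : f x₀ = 0) (hf'x₀ : deriv f x₀ < 0) (hneg : ∀ y ∈ Ioo x₀ b, f y < 0)
    (hq : 0 < q) (hqb : x₀ + q < b) :
    ∃ β > 0, ∃ δ > 0, ∀ s, |s - x₀| ≤ δ → ∀ r ∈ Ioc 0 q, slope f s (s + r) ≤ -β := by
  obtain ⟨η, hη, hderiv⟩ := Metric.eventually_nhds_iff.1
    (((hf.continuous_deriv le_rfl).continuousAt (x := x₀)).eventually_lt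
      (continuousAt_const (y := deriv f x₀ / 2)) (by linarith))
  set η' := min η (b - x₀ - q)
  have hη' : 0 < η' := lt_min hη (by linarith)
  -- for `r > η' / 2` the point `s + r` lies in this interval, on which `f ≤ M < 0`
  obtain ⟨y₀, hy₀, hfar⟩ := (isCompact_Icc (a := x₀ + η' / 4) (b := x₀ + q + η' / 4)).exists_isMaxOn
      (nonempty_Icc.2 (by linarith)) hf.continuous.continuousOn
  set M := f y₀
  have hM : M < 0 := hneg y₀
    ⟨by linarith [hy₀.1], by linarith [hy₀.2, min_le_right η (b - x₀ - q)]⟩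
  obtain ⟨δ₁, hδ₁, hnear⟩ := Metric.eventually_nhds_iff.1
    (continuousAt_const.eventually_lt hf.continuous.continuousAt
      (show M / 2 < f x₀ by linarith))
  refine ⟨min (-deriv f x₀ / 2) (-M / (2 * q)),
    lt_min (by linarith) (div_pos (by linarith) (by linarith)), min (η' / 4) (δ₁ / 2),
    lt_min (by linarith) (by linarith), fun s hs r hr => ?_⟩
  have hs' := abs_le.1 (hs.trans (min_le_left _ _))
  rcases le_or_gt r (η' / 2) with hsmall | hlarge
  · obtain ⟨z, hz, hslope⟩ := exists_deriv_eq_slope f (lt_add_of_pos_right s hr.1)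
      hf.continuous.continuousOn (hf.differentiable one_ne_zero).differentiableOn
    have hzx₀ : dist z x₀ < η := by
      rw [Real.dist_eq, abs_lt]
      constructor <;> linarith [hz.1, hz.2, min_le_left η (b - x₀ - q)]
    rw [slope_def_field, ← hslope]
    linarith [hderiv hzx₀, min_le_left (-deriv f x₀ / 2) (-M / (2 * q))]
  · have hfs : M / 2 < f s := hnear <| by
      rw [Real.dist_eq]; exact (hs.trans (min_le_right _ _)).trans_lt (half_lt_self hδ₁)
    have hfsr : f (s + r) ≤ M := hfar ⟨by linarith, by linarith [hr.2]⟩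
    have hMr : M / 2 ≤ M / (2 * q) * r := by
      rw [div_mul_eq_mul_div, le_div_iff₀ (by positivity)]
      nlinarith [hr.2]
    calc slope f s (s + r) ≤ M / (2 * q) := by
          rw [slope_def_field, add_sub_cancel_left, div_le_iff₀ hr.1]
          linarith
      _ ≤ _ := by linarith [min_le_right (-deriv f x₀ / 2) (-M / (2 * q)), neg_div (2 * q) M]

lemma slope_neg_comp_neg (f : ℝ → ℝ) (x y : ℝ) :
    slope (fun t => -f (-t)) (-x) (-y) = slope f x y := by
  simp only [slope_def_field, neg_neg]
  rw [← neg_div_neg_eq]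
  congr 1 <;> ring

lemma exists_slope_le_neg_of_deriv_neg {f : ℝ → ℝ} (hf : ContDiff ℝ 1 f) {x₀ b b' q q' : ℝ}
    (hfx₀ : f x₀ = 0) (hf'x₀ : deriv f x₀ < 0) (hneg : ∀ y ∈ Ioo x₀ b, f y < 0)
    (hpos : ∀ y ∈ Ioo b' x₀, 0 < f y) (hq : 0 < q) (hqb : x₀ + q < b) (hq' : 0 < q')
    (hq'b' : b' < x₀ - q') :
    ∃ β > 0, ∃ δ > 0, ∀ s, |s - x₀| ≤ δ → ∀ r ∈ Icc (-q') q, r ≠ 0 →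
      slope f s (s + r) ≤ -β := by
  obtain ⟨β₁, hβ₁, δ₁, hδ₁, hright⟩ :=
    exists_slope_le_neg_of_deriv_neg_right hf hfx₀ hf'x₀ hneg hq hqb
  obtain ⟨β₂, hβ₂, δ₂, hδ₂, hleft⟩ := exists_slope_le_neg_of_deriv_neg_right
    (f := fun y => -f (-y)) (x₀ := -x₀) (b := -b') (hf.comp contDiff_neg).neg
    (by simp [hfx₀]) (by simpa [deriv_comp_neg] using hf'x₀)
    (fun y hy => by simpa using hpos (-y) ⟨by linarith [hy.2], by linarith [hy.1]⟩)
    hq' (by linarith)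
  refine ⟨min β₁ β₂, lt_min hβ₁ hβ₂, min δ₁ δ₂, lt_min hδ₁ hδ₂, fun s hs r hr hr0 => ?_⟩
  rcases hr0.lt_or_gt with hr0 | hr0
  · have hs' : |-s - -x₀| ≤ δ₂ := by
      rw [abs_sub_comm, neg_sub_neg]; exact hs.trans (min_le_right _ _)
    have := hleft (-s) hs' (-r) ⟨by linarith, by linarith [hr.1]⟩
    rw [← neg_add, slope_neg_comp_neg] at this
    exact this.trans (neg_le_neg (min_le_right _ _))
  · exact (hright s (hs.trans (min_le_left _ _)) r ⟨hr0, hr.2⟩).trans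
      (neg_le_neg (min_le_left _ _))

theorem exists_slope_le_neg_near_stable_zeros {g : ℝ → ℝ} {a q₀ q₁ : ℝ} (hg : ContDiff ℝ 1 g)
    (hg0 : g 0 = 0) (hg1 : g 1 = 0) (hdg0 : deriv g 0 < 0) (hdg1 : deriv g 1 < 0)
    (hgpos : ∀ s : ℝ, s < 0 ∨ (a < s ∧ s < 1) → 0 < g s)
    (hgneg : ∀ s : ℝ, (0 < s ∧ s < a) ∨ 1 < s → g s < 0)
    (hq₀ : q₀ ∈ Ioo 0 a) (hq₁ : q₁ ∈ Ioo 0 (1 - a)) :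
    ∃ β > 0, ∃ δ > 0, ∀ s, (|s| ≤ δ ∨ |s - 1| ≤ δ) → ∀ r ∈ Icc (-q₁) q₀, r ≠ 0 →
      slope g s (s + r) ≤ -β := by
  obtain ⟨β₀, hβ₀, δ₀, hδ₀, h0⟩ := exists_slope_le_neg_of_deriv_neg hg (b := a) (b' := -q₁ - 1)
    hg0 hdg0 (fun y hy => hgneg y (Or.inl hy)) (fun y hy => hgpos y (Or.inl hy.2)) hq₀.1
    (by linarith [hq₀.2]) hq₁.1 (by linarith)
  obtain ⟨β₁, hβ₁, δ₁, hδ₁, h1⟩ := exists_slope_le_neg_of_deriv_neg hg (b := 2 + q₀) (b' := a)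
    hg1 hdg1 (fun y hy => hgneg y (Or.inr hy.1)) (fun y hy => hgpos y (Or.inr hy)) hq₀.1
    (by linarith) hq₁.1 (by linarith [hq₁.2])
  refine ⟨min β₀ β₁, lt_min hβ₀ hβ₁, min δ₀ δ₁, lt_min hδ₀ hδ₁, fun s hs r hr hr0 => ?_⟩
  rcases hs with hs | hs
  · exact (h0 s (by simpa using hs.trans (min_le_left _ _)) r hr hr0).trans
      (neg_le_neg (min_le_left _ _))
  · exact (h1 s (hs.trans (min_le_right _ _)) r hr hr0).trans (neg_le_neg (min_le_right _ _))

lemma exists_pos_le_of_mem_Icc_of_tendsto {Φ ψ : ℝ → ℝ} {l₀ l₁ y₀ y₁ : ℝ} (hψ : Continuous ψ)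
    (hψpos : ∀ x, 0 < ψ x) (hbot : Tendsto Φ atBot (𝓝 l₀)) (htop : Tendsto Φ atTop (𝓝 l₁))
    (hy₀ : l₀ < y₀) (hy₁ : y₁ < l₁) :
    ∃ m > 0, ∀ x, Φ x ∈ Icc y₀ y₁ → m ≤ ψ x := by
  obtain ⟨A, hA⟩ := eventually_atBot.1 (hbot.eventually_lt_const hy₀)
  obtain ⟨B, hB⟩ := eventually_atTop.1 (htop.eventually_const_lt hy₁)
  obtain ⟨m, hm, hmin⟩ := (isCompact_Icc (a := A) (b := B)).exists_forall_le'
    hψ.continuousOn fun x _ => hψpos x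
  refine ⟨m, hm, fun x hx => hmin x ⟨?_, ?_⟩⟩
  · by_contra h
    exact (hA x (not_le.1 h).le).not_ge hx.1
  · by_contra h
    exact (hB x (not_le.1 h).le).not_ge hx.2

section TravellingWave

variable {g Φ : ℝ → ℝ} {c : ℝ}

lemma hasDerivAt_deriv_of_wave (hc : c ≠ 0) (hg : Differentiable ℝ g)
    (hΦ : Differentiable ℝ Φ)
    (hwave : ∀ ξ, -c * deriv Φ ξ = Φ (ξ + 1) + Φ (ξ - 1) - 2 * Φ ξ + g (Φ ξ)) (x : ℝ) :
    HasDerivAt (deriv Φ) (-(deriv Φ (x + 1) + deriv Φ (x - 1) - 2 * deriv Φ x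
      + deriv g (Φ x) * deriv Φ x) / c) x := by
  have hψ : ∀ ξ, deriv Φ ξ = -(Φ (ξ + 1) + Φ (ξ - 1) - 2 * Φ ξ + g (Φ ξ)) / c := fun ξ => by
    rw [eq_div_iff hc]
    linarith [hwave ξ]
  refine HasDerivAt.congr_of_eventuallyEq ?_ (Eventually.of_forall hψ)
  refine HasDerivAt.div_const (HasDerivAt.neg ?_) c
  exact ((((hΦ _).hasDerivAt.comp_add_const x 1).add ((hΦ _).hasDerivAt.comp_sub_const x 1)).sub
    ((hΦ x).hasDerivAt.const_mul 2)).add ((hg _).hasDerivAt.comp x (hΦ x).hasDerivAt)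

theorem deriv_pos_of_wave (hc : c ≠ 0) (hg : ContDiff ℝ 1 g) (hΦ : ContDiff ℝ 1 Φ)
    (hmono : StrictMono Φ) (hΦ01 : ∀ ξ, Φ ξ ∈ Icc (0 : ℝ) 1)
    (hwave : ∀ ξ, -c * deriv Φ ξ = Φ (ξ + 1) + Φ (ξ - 1) - 2 * Φ ξ + g (Φ ξ)) (x : ℝ) :
    0 < deriv Φ x := by
  set ψ := deriv Φ
  have hΦd : Differentiable ℝ Φ := hΦ.differentiable one_ne_zero
  have hψ := hasDerivAt_deriv_of_wave hc (hg.differentiable one_ne_zero) hΦd hwave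
  have hψ0 : ∀ x, 0 ≤ ψ x := fun x => hmono.monotone.deriv_nonneg
  obtain ⟨G, hG⟩ := isCompact_Icc.exists_bound_of_continuousOn
    (hg.continuous_deriv le_rfl).continuousOn
  set ψ' := fun x => -(ψ (x + 1) + ψ (x - 1) - 2 * ψ x + deriv g (Φ x) * ψ x) / c
  have hgrowth : ∀ x, c * ψ' x ≤ (2 + G) * ψ x := by
    intro x
    simp only [ψ', mul_div_cancel₀ _ hc]
    have hG' : -deriv g (Φ x) ≤ G := (neg_le_abs _).trans (by simpa using hG _ (hΦ01 x))
    nlinarith [hψ0 (x + 1), hψ0 (x - 1), hψ0 x]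
  refine (hψ0 x).lt_of_ne' fun hx => ?_
  obtain ⟨u, hvanish⟩ : ∃ u, ∀ y ∈ Icc u (u + 1), ψ y = 0 := by
    rcases hc.lt_or_gt with hneg | hpos
    · refine ⟨x - 1, fun y hy => eq_zero_of_neg_mul_self_le_hasDerivAt (K := (2 + G) / -c)
        hψ hψ0 (fun y => ?_) hx (by linarith [hy.2])⟩
      rw [div_neg, neg_neg, div_mul_eq_mul_div, div_le_iff_of_neg hneg]
      linarith [hgrowth y]
    · refine ⟨x, fun y hy => eq_zero_of_hasDerivAt_le_mul_self (K := (2 + G) / c)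
        hψ hψ0 (fun y => ?_) hx hy.1⟩
      rw [div_mul_eq_mul_div, le_div_iff₀ hpos]
      linarith [hgrowth y]
  obtain ⟨z, hz, hpos⟩ := hmono.exists_deriv_pos hΦd (lt_add_one u)
  exact hpos.ne' (hvanish z (Ioo_subset_Icc_self hz))

end TravellingWave

lemma uMinus_eq_uPlus_neg (Φ : ℝ → ℝ) (c C q μ : ℝ) : uMinus Φ c C q μ = uPlus Φ c C (-q) μ := by
  funext t i j
  simp only [uMinus, uPlus]
  ring_nf

lemma acResidual_uPlus {g Φ : ℝ → ℝ} {c : ℝ} (hΦ : Differentiable ℝ Φ)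
    (hwave : ∀ ξ, -c * deriv Φ ξ = Φ (ξ + 1) + Φ (ξ - 1) - 2 * Φ ξ + g (Φ ξ))
    (C q μ : ℝ) (i j : ℤ) (t : ℝ) :
    acResidual g (uPlus Φ c C q μ) i j t
      = q * Real.exp (-μ * t) * (C * μ * deriv Φ (i - c * t + C * q * (1 - Real.exp (-μ * t)))
        - μ - slope g (Φ (i - c * t + C * q * (1 - Real.exp (-μ * t))))
          (Φ (i - c * t + C * q * (1 - Real.exp (-μ * t))) + q * Real.exp (-μ * t))) := by
  have he : HasDerivAt (fun s => Real.exp (-μ * s)) (-μ * Real.exp (-μ * t)) t := by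
    simpa [mul_comm] using ((hasDerivAt_id t).const_mul (-μ)).exp
  set e := Real.exp (-μ * t)
  set ξ := (i : ℝ) - c * t + C * q * (1 - e)
  have hξ : HasDerivAt (fun s => (i : ℝ) - c * s + C * q * (1 - Real.exp (-μ * s)))
      (-c + C * q * (μ * e)) t :=
    ((((hasDerivAt_id' t).const_mul c).const_sub (i : ℝ)).add
      ((he.const_sub 1).const_mul (C * q))).congr_deriv (by ring)
  have hu : HasDerivAt (fun s => uPlus Φ c C q μ s i j)
      (deriv Φ ξ * (-c + C * q * (μ * e)) + q * (-μ * e)) t :=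
    ((hΦ ξ).hasDerivAt.comp t hξ).add (he.const_mul q)
  have hslope := sub_smul_slope g (Φ ξ) (Φ ξ + q * e)
  rw [smul_eq_mul, vsub_eq_sub, add_sub_cancel_left] at hslope
  rw [acResidual, hu.deriv]
  simp only [uPlus]
  push_cast
  rw [show (i : ℝ) + 1 - c * t + C * q * (1 - e) = ξ + 1 by ring,
    show (i : ℝ) - 1 - c * t + C * q * (1 - e) = ξ - 1 by ring]
  linear_combination hwave ξ + hslope

theorem exists_slope_le_wave_deriv {g Φ : ℝ → ℝ} {a q₀ q₁ : ℝ} (hg : ContDiff ℝ 1 g)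
    (hg0 : g 0 = 0) (hg1 : g 1 = 0) (hdg0 : deriv g 0 < 0) (hdg1 : deriv g 1 < 0)
    (hgpos : ∀ s : ℝ, s < 0 ∨ (a < s ∧ s < 1) → 0 < g s)
    (hgneg : ∀ s : ℝ, (0 < s ∧ s < a) ∨ 1 < s → g s < 0)
    (hΦ : ContDiff ℝ 1 Φ) (hΦ' : ∀ ξ, 0 < deriv Φ ξ) (hΦ01 : ∀ ξ, Φ ξ ∈ Icc (0 : ℝ) 1)
    (hbot : Tendsto Φ atBot (𝓝 0)) (htop : Tendsto Φ atTop (𝓝 1))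
    (hq₀ : q₀ ∈ Ioo 0 a) (hq₁ : q₁ ∈ Ioo 0 (1 - a)) :
    ∃ μ > 0, ∃ C, 1 ≤ C ∧ ∀ ξ, ∀ r ∈ Icc (-q₁) q₀, r ≠ 0 →
      slope g (Φ ξ) (Φ ξ + r) ≤ C * μ * deriv Φ ξ - μ := by
  obtain ⟨β, hβ, δ, hδ, hends⟩ :=
    exists_slope_le_neg_near_stable_zeros hg hg0 hg1 hdg0 hdg1 hgpos hgneg hq₀ hq₁
  obtain ⟨L, hL⟩ := hg.contDiffOn.exists_lipschitzOnWith one_ne_zero (convex_Icc (-1 : ℝ) 2)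
    isCompact_Icc
  obtain ⟨m, hm, hmid⟩ := exists_pos_le_of_mem_Icc_of_tendsto (y₀ := δ) (y₁ := 1 - δ)
    (hΦ.continuous_deriv le_rfl) hΦ' hbot htop hδ (by linarith)
  set C := max 1 ((β + L) / (β * m))
  have hC : β + L ≤ C * β * m := by
    rw [mul_assoc, ← div_le_iff₀ (by positivity)]
    exact le_max_right _ _
  refine ⟨β, hβ, C, le_max_left _ _, fun ξ r hr hr0 => ?_⟩
  have hCβΦ' : 0 ≤ C * β * deriv Φ ξ :=
    mul_nonneg (mul_nonneg (zero_le_one.trans (le_max_left _ _)) hβ.le) (hΦ' ξ).le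
  by_cases hend : |Φ ξ| ≤ δ ∨ |Φ ξ - 1| ≤ δ
  · linarith [hends _ hend r hr hr0]
  rw [not_or, not_le, not_le, abs_of_nonneg (hΦ01 ξ).1,
    abs_of_nonpos (sub_nonpos.2 (hΦ01 ξ).2)] at hend
  have hmΦ' := hmid ξ ⟨hend.1.le, by linarith⟩
  have hslope : slope g (Φ ξ) (Φ ξ + r) ≤ L :=
    (le_abs_self _).trans <| hL.abs_slope_le
      ⟨by linarith [(hΦ01 ξ).1], by linarith [(hΦ01 ξ).2]⟩
      ⟨by linarith [(hΦ01 ξ).1, hr.1, hq₁.2, hq₀.1, hq₀.2],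
        by linarith [(hΦ01 ξ).2, hr.2, hq₀.2, hq₁.1, hq₁.2]⟩
  have : C * β * m ≤ C * β * deriv Φ ξ := by gcongr
  linarith

theorem planar_super_and_sub_solutions_general
    (g : ℝ → ℝ) (a c : ℝ) (Φ : ℝ → ℝ)
    -- (Hg): g is C² and bistable
    (hg : ContDiff ℝ 2 g)
    (hg0 : g 0 = 0) (hg1 : g 1 = 0)
    (hdg0 : deriv g 0 < 0) (hdg1 : deriv g 1 < 0)
    (hgpos : ∀ s : ℝ, s < 0 ∨ (a < s ∧ s < 1) → 0 < g s)
    (hgneg : ∀ s : ℝ, (0 < s ∧ s < a) ∨ 1 < s → g s < 0)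
    -- (HΦ): horizontal travelling wave with nonzero speed
    (hc : c ≠ 0) (hPhiC1 : ContDiff ℝ 1 Φ) (hPhimono : StrictMono Φ)
    (hPhibot : Tendsto Φ atBot (nhds 0)) (hPhitop : Tendsto Φ atTop (nhds 1))
    (hPhieq : ∀ ξ : ℝ, -c * deriv Φ ξ = Φ (ξ + 1) + Φ (ξ - 1) - 2 * Φ ξ + g (Φ ξ))
    :
    ∀ q0 : ℝ, q0 ∈ Set.Ioo 0 a → ∀ q1 : ℝ, q1 ∈ Set.Ioo 0 (1 - a) →
      ∃ μ : ℝ, 0 < μ ∧ ∃ C : ℝ, 1 ≤ C ∧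
        (∀ i j : ℤ, ∀ t : ℝ, 0 ≤ t → 0 ≤ acResidual g (uPlus Φ c C q0 μ) i j t) ∧
        (∀ i j : ℤ, ∀ t : ℝ, 0 ≤ t → acResidual g (uMinus Φ c C q1 μ) i j t ≤ 0) := by
  intro q0 hq0 q1 hq1
  have hgC1 : ContDiff ℝ 1 g := hg.of_le one_le_two
  have hΦ01 : ∀ ξ, Φ ξ ∈ Icc (0 : ℝ) 1 := fun ξ =>
    ⟨hPhimono.monotone.le_of_tendsto hPhibot ξ, hPhimono.monotone.ge_of_tendsto hPhitop ξ⟩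
  have hΦ' := deriv_pos_of_wave hc hgC1 hPhiC1 hPhimono hΦ01 hPhieq
  obtain ⟨μ, hμ, C, hC, hslope⟩ := exists_slope_le_wave_deriv hgC1 hg0 hg1 hdg0 hdg1 hgpos
    hgneg hPhiC1 hΦ' hΦ01 hPhibot hPhitop hq0 hq1
  have hΦd : Differentiable ℝ Φ := hPhiC1.differentiable one_ne_zero
  have hdecay : ∀ t, 0 ≤ t → 0 < Real.exp (-μ * t) ∧ Real.exp (-μ * t) ≤ 1 := fun t ht =>
    ⟨Real.exp_pos _, Real.exp_le_one_iff.2 (by nlinarith)⟩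
  refine ⟨μ, hμ, C, hC, fun i j t ht => ?_, fun i j t ht => ?_⟩
  · obtain ⟨he, he1⟩ := hdecay t ht
    rw [acResidual_uPlus hΦd hPhieq]
    refine mul_nonneg (by nlinarith [hq0.1]) (sub_nonneg.2 (hslope _ _ ⟨?_, ?_⟩ ?_))
    · nlinarith [hq0.1, hq1.1]
    · nlinarith [hq0.1]
    · exact mul_ne_zero hq0.1.ne' he.ne'
  · obtain ⟨he, he1⟩ := hdecay t ht
    rw [uMinus_eq_uPlus_neg, acResidual_uPlus hΦd hPhieq]
    refine mul_nonpos_of_nonpos_of_nonneg (by nlinarith [hq1.1])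
      (sub_nonneg.2 (hslope _ _ ⟨?_, ?_⟩ ?_))
    · nlinarith [hq1.1]
    · nlinarith [hq0.1, hq1.1]
    · exact mul_ne_zero (neg_ne_zero.2 hq1.1.ne') he.ne'

theorem planar_super_and_sub_solutions
    (g : ℝ → ℝ) (a c : ℝ) (Φ : ℝ → ℝ)
    -- (Hg): g is C² and bistable
    (hg : ContDiff ℝ 2 g) (ha : a ∈ Set.Ioo (0 : ℝ) 1)
    (hg0 : g 0 = 0) (hga : g a = 0) (hg1 : g 1 = 0)
    (hdg0 : deriv g 0 < 0) (hdg1 : deriv g 1 < 0)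
    (hgpos : ∀ s : ℝ, s < 0 ∨ (a < s ∧ s < 1) → 0 < g s)
    (hgneg : ∀ s : ℝ, (0 < s ∧ s < a) ∨ 1 < s → g s < 0)
    -- (HΦ): horizontal travelling wave with nonzero speed
    (hc : c ≠ 0) (hPhiC1 : ContDiff ℝ 1 Φ) (hPhimono : StrictMono Φ)
    (hPhibot : Tendsto Φ atBot (nhds 0)) (hPhitop : Tendsto Φ atTop (nhds 1))
    (hPhihalf : Φ 0 = 1 / 2)
    (hPhieq : ∀ ξ : ℝ, -c * deriv Φ ξ = Φ (ξ + 1) + Φ (ξ - 1) - 2 * Φ ξ + g (Φ ξ))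
    :
    ∀ q0 : ℝ, q0 ∈ Set.Ioo 0 a → ∀ q1 : ℝ, q1 ∈ Set.Ioo 0 (1 - a) →
      ∃ μ : ℝ, 0 < μ ∧ ∃ C : ℝ, 1 ≤ C ∧
        (∀ i j : ℤ, ∀ t : ℝ, 0 ≤ t → 0 ≤ acResidual g (uPlus Φ c C q0 μ) i j t) ∧
        (∀ i j : ℤ, ∀ t : ℝ, 0 ≤ t → acResidual g (uMinus Φ c C q1 μ) i j t ≤ 0) :=
  planar_super_and_sub_solutions_general g a c Φ hg hg0 hg1 hdg0 hdg1 hgpos hgneg hc hPhiC1 hPhimono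
    hPhibot hPhitop hPhieq
end
end

section
/- Assume (Hg) and (H0), let u : [0,∞) → ℓ^∞(ℤ²) be a bounded C¹ solution of the discrete Allen–Cahn equation with u(0)=u⁰, and pick q₀ ∈ (0,a) such that limsup_{i→−∞} sup_{j∈ℤ} u⁰_{i,j} < q₀. Then for every t > 0 one has limsup_{i→−∞} sup_{j∈ℤ} u_{i,j}(t) < q₀. -/
/-!
Comparison with explicit supersolutions. Pick `β` with `limsup u⁰ < β < q₀` and `β > 0`, so that
`g β < 0`, and set `W(t,i,j) = β + (K eⁱ + η (eⁱ + e⁻ⁱ + eʲ + e⁻ʲ)) e^{ct}`. Each of `e^{±i}`,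
`e^{±j}` is an eigenfunction of the lattice Laplacian with eigenvalue `λ = e + e⁻¹ - 2`, and
`g (β + E) ≤ g β + C E < C E` on the range of `u`, so `W` is a strict supersolution once
`c ≥ λ + C`; `K` is chosen so that `W(0) > u⁰`. For `η > 0`, `W` exceeds the bound of `u` outside
finitely many sites, so if `u` ever reached `W` there would be a first contact time, at which the
two equations contradict each other. Letting `η → 0` gives `u(t,i,j) ≤ β + K e^{ct} eⁱ`, which is
below `q₀` for `i` negative enough.
-/

open Filter Topology MeasureTheory Set

noncomputable section

open Real

lemma HasDerivWithinAt.nonneg_of_isMaxOn_Icc {f : ℝ → ℝ} {f' a b : ℝ}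
    (hf : HasDerivWithinAt f f' (Icc a b) b) (hab : a < b) (hmax : IsMaxOn f (Icc a b) b) :
    0 ≤ f' := by
  have hcone : a - b ∈ posTangentConeAt (Icc a b) b :=
    mem_posTangentConeAt_of_segment_subset (by
      rw [add_sub_cancel, segment_symm]
      exact (segment_eq_Icc hab.le).subset)
  have := hmax.localize.hasFDerivWithinAt_nonpos hf hcone
  rw [ContinuousLinearMap.toSpanSingleton_apply, smul_eq_mul] at this
  nlinarith

lemma exists_first_nonneg {ι : Type*} {d : ℝ → ι → ℝ} {F : Set ι} (hF : F.Finite)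
    (hcont : ∀ p, ContinuousOn (fun t => d t p) (Ici 0))
    (hmemF : ∀ t, 0 ≤ t → ∀ p, 0 ≤ d t p → p ∈ F) (h0 : ∀ p, d 0 p < 0)
    {t₀ : ℝ} (ht₀ : 0 ≤ t₀) {p₀ : ι} (hp₀ : 0 ≤ d t₀ p₀) :
    ∃ τ, 0 < τ ∧ ∃ p, d τ p = 0 ∧ (∀ q, d τ q ≤ 0) ∧ ∀ t ∈ Ico 0 τ, ∀ q, d t q < 0 := by
  set S := ⋃ p ∈ F, Icc 0 t₀ ∩ (fun t => d t p) ⁻¹' Ici 0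
  have hS : IsCompact S := by
    refine isCompact_Icc.of_isClosed_subset (hF.isClosed_biUnion fun p _ => ?_)
      (iUnion₂_subset fun p _ => inter_subset_left)
    exact ((hcont p).mono Icc_subset_Ici_self).preimage_isClosed_of_isClosed isClosed_Icc
      isClosed_Ici
  have hmemS : ∀ t ∈ Icc 0 t₀, ∀ p, 0 ≤ d t p → t ∈ S := fun t ht p hp =>
    mem_biUnion (hmemF t ht.1 p hp) ⟨ht, hp⟩
  obtain ⟨τ, hτS, hτmin⟩ := hS.exists_isLeast ⟨t₀, hmemS t₀ ⟨ht₀, le_rfl⟩ p₀ hp₀⟩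
  obtain ⟨p, -, ⟨hτ0, hτt₀⟩, hpτ⟩ := mem_iUnion₂.1 hτS
  have hτ : 0 < τ := hτ0.lt_of_ne fun h => (h0 p).not_ge (h ▸ hpτ)
  have hbefore : ∀ t ∈ Ico 0 τ, ∀ q, d t q < 0 := fun t ht q =>
    lt_of_not_ge fun hq => ht.2.not_ge (hτmin (hmemS t ⟨ht.1, ht.2.le.trans hτt₀⟩ q hq))
  have hle : ∀ q, d τ q ≤ 0 := by
    intro q
    have : (𝓝[Ico 0 τ] τ).NeBot := by
      rw [nhdsWithin_Ico_eq_nhdsLT hτ]; infer_instance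
    exact le_of_tendsto (((hcont q) τ hτ.le).mono fun t ht => ht.1)
      (eventually_mem_nhdsWithin.mono fun t ht => (hbefore t ht q).le)
  exact ⟨τ, hτ, p, le_antisymm (hle p) hpτ, hle, hbefore⟩

def latticeLaplacian (w : ℤ → ℤ → ℝ) (i j : ℤ) : ℝ :=
  w (i + 1) j + w (i - 1) j + w i (j + 1) + w i (j - 1) - 4 * w i j

lemma acRHS_eq (g : ℝ → ℝ) (w : ℤ → ℤ → ℝ) (i j : ℤ) :
    acRHS g w i j = latticeLaplacian w i j + g (w i j) := rfl

lemma latticeLaplacian_le_of_le_of_eq {w v : ℤ → ℤ → ℝ} {i j : ℤ} (hle : ∀ k l, w k l ≤ v k l)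
    (heq : w i j = v i j) : latticeLaplacian w i j ≤ latticeLaplacian v i j := by
  unfold latticeLaplacian
  linarith [hle (i + 1) j, hle (i - 1) j, hle i (j + 1), hle i (j - 1)]

lemma latticeLaplacian_const_add_mul (w : ℤ → ℤ → ℝ) (b s : ℝ) (i j : ℤ) :
    latticeLaplacian (fun k l => b + w k l * s) i j = latticeLaplacian w i j * s := by
  unfold latticeLaplacian
  ring

theorem lt_of_strict_supersolution {g : ℝ → ℝ} {u W W' : ℝ → ℤ → ℤ → ℝ} {B : ℝ}
    {F : Set (ℤ × ℤ)} (hF : F.Finite)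
    (hu : ∀ i j : ℤ, ∀ t : ℝ, 0 ≤ t →
      HasDerivWithinAt (fun s => u s i j) (acRHS g (u t) i j) (Ici 0) t)
    (huB : ∀ t : ℝ, 0 ≤ t → ∀ i j : ℤ, u t i j ≤ B)
    (hW : ∀ i j : ℤ, ∀ t : ℝ, HasDerivAt (fun s => W s i j) (W' t i j) t)
    (hsuper : ∀ t : ℝ, 0 < t → ∀ i j : ℤ, W t i j ≤ B → acRHS g (W t) i j < W' t i j)
    (hWF : ∀ t : ℝ, 0 ≤ t → ∀ i j : ℤ, W t i j ≤ B → (i, j) ∈ F)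
    (h0 : ∀ i j : ℤ, u 0 i j < W 0 i j) :
    ∀ t : ℝ, 0 ≤ t → ∀ i j : ℤ, u t i j < W t i j := by
  by_contra! hcon
  obtain ⟨t₀, ht₀, i₀, j₀, h₀⟩ := hcon
  obtain ⟨τ, hτ, ⟨i, j⟩, hτeq, hτle, hbefore⟩ :=
    exists_first_nonneg (d := fun t p => u t p.1 p.2 - W t p.1 p.2) hF
      (fun p t ht => ((hu p.1 p.2 t ht).continuousWithinAt).sub
        (hW p.1 p.2 t).continuousAt.continuousWithinAt)
      (fun t ht p hp => hWF t ht p.1 p.2 ((sub_nonneg.1 hp).trans (huB t ht p.1 p.2)))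
      (fun p => sub_neg.2 (h0 p.1 p.2)) ht₀ (p₀ := (i₀, j₀)) (sub_nonneg.2 h₀)
  simp only [sub_nonpos, sub_eq_zero] at hτeq hτle
  have hmax : IsMaxOn (fun t => u t i j - W t i j) (Icc 0 τ) τ := by
    refine isMaxOn_iff.2 fun t ht => ?_
    rcases ht.2.lt_or_eq with htτ | rfl
    · rw [hτeq, sub_self]
      exact (hbefore t ⟨ht.1, htτ⟩ (i, j)).le
    · exact le_rfl
  have hderiv : 0 ≤ acRHS g (u τ) i j - W' τ i j :=
    (((hu i j τ hτ.le).sub (hW i j τ).hasDerivWithinAt).mono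
      Icc_subset_Ici_self).nonneg_of_isMaxOn_Icc hτ hmax
  have hcomp : acRHS g (u τ) i j ≤ acRHS g (W τ) i j := by
    rw [acRHS_eq, acRHS_eq, hτeq]
    exact add_le_add_left (latticeLaplacian_le_of_le_of_eq (fun k l => hτle (k, l)) hτeq) _
  have := hsuper τ hτ i j (hτeq ▸ huB τ hτ.le i j)
  linarith

def barrierProfile (K η : ℝ) (i j : ℤ) : ℝ :=
  K * exp i + η * (exp i + exp (-i) + exp j + exp (-j))

lemma barrierProfile_pos {K η : ℝ} (hK : 0 ≤ K) (hη : 0 < η) (i j : ℤ) :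
    0 < barrierProfile K η i j := by
  unfold barrierProfile
  positivity

lemma latticeLaplacian_barrierProfile (K η : ℝ) (i j : ℤ) :
    latticeLaplacian (barrierProfile K η) i j
      = (exp 1 + exp (-1) - 2) * barrierProfile K η i j := by
  have shift (x : ℝ) : exp (x + 1) = exp x * exp 1 ∧ exp (x - 1) = exp x * exp (-1) := by
    rw [← exp_add, ← exp_add, sub_eq_add_neg]; exact ⟨rfl, rfl⟩
  unfold latticeLaplacian barrierProfile
  push_cast
  simp only [neg_add', neg_sub', sub_neg_eq_add, (shift _).1, (shift _).2]
  ring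

lemma finite_setOf_barrierProfile_le {K η : ℝ} (hK : 0 ≤ K) (hη : 0 < η) (R : ℝ) :
    {p : ℤ × ℤ | barrierProfile K η p.1 p.2 ≤ R}.Finite := by
  set M := ⌈R / η⌉
  have hbound (k : ℤ) (hk : η * exp k + η * exp (-k) ≤ R) : k ∈ Icc (-M) M := by
    have habs : |(k : ℝ)| ≤ exp k + exp (-k) := abs_le.2
      ⟨by linarith [add_one_le_exp (-k), exp_pos k], by linarith [add_one_le_exp k, exp_pos (-k)]⟩
    have hk' : |(k : ℝ)| ≤ R / η :=
      (le_div_iff₀' hη).2 ((mul_le_mul_of_nonneg_left habs hη.le).trans (by linarith))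
    obtain ⟨h₁, h₂⟩ := abs_le.1 (hk'.trans (Int.le_ceil _))
    exact ⟨by exact_mod_cast h₁, by exact_mod_cast h₂⟩
  refine ((finite_Icc (-M) M).prod (finite_Icc (-M) M)).subset fun ⟨i, j⟩ hp => ?_
  simp only [mem_ofPred_eq, barrierProfile, mul_add] at hp
  have hpos (x : ℝ) : 0 < η * exp x := mul_pos hη (exp_pos x)
  have := mul_nonneg hK (exp_pos i).le
  exact ⟨hbound i (by linarith [hpos j, hpos (-j)]), hbound j (by linarith [hpos i, hpos (-i)])⟩

lemma exists_sub_le_mul_sub_of_contDiff {g : ℝ → ℝ} (hg : ContDiff ℝ 1 g) (b B : ℝ) :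
    ∃ C, ∀ x ∈ Icc b B, g x - g b ≤ C * (x - b) := by
  obtain ⟨C, hC⟩ := isCompact_Icc.bddAbove_image (hg.continuous_deriv le_rfl).continuousOn
  exact ⟨C, fun x hx => (convex_Icc b B).image_sub_le_mul_sub_of_deriv_le
    hg.continuous.continuousOn (hg.differentiable one_ne_zero).differentiableOn
    (fun y hy => hC (mem_image_of_mem _ (interior_subset hy)))
    b (left_mem_Icc.2 (hx.1.trans hx.2)) x hx hx.1⟩

section Barrier

variable {g : ℝ → ℝ} {β B C K c : ℝ}

lemma acRHS_barrier_lt (hgβ : g β < 0) (hC : ∀ x ∈ Icc β B, g x - g β ≤ C * (x - β))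
    (hc : exp 1 + exp (-1) - 2 + C ≤ c) {η : ℝ} (hK : 0 ≤ K) (hη : 0 < η) (t : ℝ) {i j : ℤ}
    (hWB : β + barrierProfile K η i j * exp (c * t) ≤ B) :
    acRHS g (fun k l => β + barrierProfile K η k l * exp (c * t)) i j
      < barrierProfile K η i j * exp (c * t) * c := by
  set E := barrierProfile K η i j * exp (c * t)
  have hE : 0 < E := mul_pos (barrierProfile_pos hK hη i j) (exp_pos _)
  have hg : g (β + E) - g β ≤ C * E := by
    simpa using hC (β + E) ⟨by linarith, hWB⟩
  rw [acRHS_eq, latticeLaplacian_const_add_mul, latticeLaplacian_barrierProfile]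
  nlinarith

variable {u : ℝ → ℤ → ℤ → ℝ} (hgβ : g β < 0) (hC : ∀ x ∈ Icc β B, g x - g β ≤ C * (x - β))
  (hc : exp 1 + exp (-1) - 2 + C ≤ c) (hc0 : 0 ≤ c) (hK : 0 ≤ K)
  (hu : ∀ i j : ℤ, ∀ t : ℝ, 0 ≤ t →
    HasDerivWithinAt (fun s => u s i j) (acRHS g (u t) i j) (Ici 0) t)
  (huB : ∀ t : ℝ, 0 ≤ t → ∀ i j : ℤ, u t i j ≤ B) (h0 : ∀ i j : ℤ, u 0 i j ≤ β + K * exp i)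
include hgβ hC hc hc0 hK hu huB h0

theorem solution_lt_barrier {η : ℝ} (hη : 0 < η) :
    ∀ t : ℝ, 0 ≤ t → ∀ i j : ℤ, u t i j < β + barrierProfile K η i j * exp (c * t) := by
  refine lt_of_strict_supersolution (finite_setOf_barrierProfile_le hK hη (B - β)) hu huB
    (W' := fun t i j => barrierProfile K η i j * exp (c * t) * c) (fun i j t => ?_)
    (fun t _ i j hWB => acRHS_barrier_lt hgβ hC hc hK hη t hWB) (fun t ht i j hWB => ?_)
    (fun i j => ?_)
  · simpa [mul_assoc] using (((hasDerivAt_id t).const_mul c).exp.const_mul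
      (barrierProfile K η i j)).const_add β
  · show barrierProfile K η i j ≤ B - β
    nlinarith [one_le_exp (mul_nonneg hc0 ht), barrierProfile_pos hK hη i j]
  · rw [mul_zero, exp_zero, mul_one]
    have : 0 < η * (exp i + exp (-i) + exp j + exp (-j)) := by positivity
    linarith [h0 i j, show barrierProfile K η i j = K * exp i + _ from rfl]

theorem solution_le_barrier :
    ∀ t : ℝ, 0 ≤ t → ∀ i j : ℤ, u t i j ≤ β + K * exp i * exp (c * t) := by
  intro t ht i j
  have hcont : Continuous fun η => β + barrierProfile K η i j * exp (c * t) := by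
    unfold barrierProfile
    fun_prop
  have hlim := (hcont.tendsto 0).mono_left (nhdsWithin_le_nhds (s := Ioi 0))
  simp only [barrierProfile, zero_mul, add_zero] at hlim
  exact ge_of_tendsto hlim (eventually_nhdsWithin_of_forall fun η hη =>
    (solution_lt_barrier hgβ hC hc hc0 hK hu huB h0 hη t ht i j).le)

end Barrier

lemma exists_forall_le_mul_exp_le (D : ℝ) {ε : ℝ} (hε : 0 < ε) :
    ∃ N : ℤ, ∀ i : ℤ, i ≤ N → D * exp i ≤ ε := by
  have hlim : Tendsto (fun i : ℤ => D * exp i) atBot (𝓝 0) := by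
    simpa using (tendsto_exp_atBot.comp (tendsto_intCast_atBot_iff.2 tendsto_id)).const_mul D
  exact eventually_atBot.1 (hlim.eventually (ge_mem_nhds hε))

lemma exists_le_mul_exp_of_le (R : ℝ) (N : ℤ) :
    ∃ K, 0 ≤ K ∧ ∀ i : ℤ, N ≤ i → R ≤ K * exp i := by
  refine ⟨|R| * exp (-N), by positivity, fun i hi => ?_⟩
  have : 1 ≤ exp (-N) * exp i := by
    rw [← exp_add]
    exact one_le_exp (by linarith [(Int.cast_le (R := ℝ)).2 hi])
  calc R ≤ |R| * 1 := by rw [mul_one]; exact le_abs_self R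
    _ ≤ |R| * (exp (-N) * exp i) := by gcongr
    _ = |R| * exp (-N) * exp i := by ring

theorem left_tail_stays_below_q0_general
    (g : ℝ → ℝ) (a : ℝ) (u0 : ℤ → ℤ → ℝ) (u : ℝ → ℤ → ℤ → ℝ) (q0 : ℝ)
    -- (Hg): g is C² and bistable
    (hg : ContDiff ℝ 2 g)
    (hgneg : ∀ s : ℝ, (0 < s ∧ s < a) ∨ 1 < s → g s < 0)
    -- u is a bounded C¹ solution of the discrete Allen-Cahn equation with u(0) = u⁰
    (huinit : ∀ i j : ℤ, u 0 i j = u0 i j)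
    (hubdd : ∃ B : ℝ, ∀ t : ℝ, 0 ≤ t → ∀ i j : ℤ, |u t i j| ≤ B)
    (husol : ∀ i j : ℤ, ∀ t : ℝ, 0 ≤ t →
      HasDerivWithinAt (fun s => u s i j) (acRHS g (u t) i j) (Set.Ici (0 : ℝ)) t)
    (hq0 : q0 ∈ Set.Ioo 0 a)
    -- limsup_{i→−∞} sup_j u⁰_{i,j} < q₀
    (hu0q0 : ∃ b : ℝ, b < q0 ∧ ∃ N : ℤ, ∀ i : ℤ, i ≤ N → ∀ j : ℤ, u0 i j ≤ b) :
    ∀ t : ℝ, 0 < t →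
      ∃ b : ℝ, b < q0 ∧ ∃ N : ℤ, ∀ i : ℤ, i ≤ N → ∀ j : ℤ, u t i j ≤ b := by
  intro t ht
  obtain ⟨b, hbq0, N, hbN⟩ := hu0q0
  obtain ⟨B, hB⟩ := hubdd
  have huB (s : ℝ) (hs : 0 ≤ s) (i j : ℤ) : u s i j ≤ B := (abs_le.1 (hB s hs i j)).2
  obtain ⟨β, hbβ, hβq0⟩ := exists_between (max_lt hbq0 hq0.1)
  obtain ⟨hbβ, hβ0⟩ := max_lt_iff.1 hbβ
  obtain ⟨C, hC⟩ := exists_sub_le_mul_sub_of_contDiff (hg.of_le one_le_two) β B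
  obtain ⟨K, hK, hKN⟩ := exists_le_mul_exp_of_le (B - β) N
  have hinit (i j : ℤ) : u 0 i j ≤ β + K * exp i := by
    rcases le_or_gt i N with hi | hi
    · linarith [huinit i j, hbN i hi j, mul_nonneg hK (exp_pos (i : ℝ)).le]
    · linarith [huB 0 le_rfl i j, hKN i hi.le]
  set c := max (exp 1 + exp (-1) - 2 + C) 0
  have hbound := solution_le_barrier (hgneg β (Or.inl ⟨hβ0, hβq0.trans hq0.2⟩)) hC
    (le_max_left _ 0) (le_max_right _ 0) hK husol huB hinit t ht.le
  obtain ⟨N', hN'⟩ := exists_forall_le_mul_exp_le (K * exp (c * t)) (half_pos (sub_pos.2 hβq0))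
  refine ⟨(β + q0) / 2, by linarith, N', fun i hi j => ?_⟩
  linarith [hbound i j, hN' i hi]

theorem left_tail_stays_below_q0
    (g : ℝ → ℝ) (a : ℝ) (u0 : ℤ → ℤ → ℝ) (u : ℝ → ℤ → ℤ → ℝ) (q0 : ℝ)
    -- (Hg): g is C² and bistable
    (hg : ContDiff ℝ 2 g) (ha : a ∈ Set.Ioo (0 : ℝ) 1)
    (hg0 : g 0 = 0) (hga : g a = 0) (hg1 : g 1 = 0)
    (hdg0 : deriv g 0 < 0) (hdg1 : deriv g 1 < 0)
    (hgpos : ∀ s : ℝ, s < 0 ∨ (a < s ∧ s < 1) → 0 < g s)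
    (hgneg : ∀ s : ℝ, (0 < s ∧ s < a) ∨ 1 < s → g s < 0)
    -- (H0): bounded front-like initial condition
    (hu0bdd : ∃ B : ℝ, ∀ i j : ℤ, |u0 i j| ≤ B)
    (hu0left : ∃ b : ℝ, b < a ∧ ∃ N : ℤ, ∀ i : ℤ, i ≤ N → ∀ j : ℤ, u0 i j ≤ b)
    (hu0right : ∃ b : ℝ, a < b ∧ ∃ N : ℤ, ∀ i : ℤ, N ≤ i → ∀ j : ℤ, b ≤ u0 i j)
    -- u is a bounded C¹ solution of the discrete Allen-Cahn equation with u(0) = u⁰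
    (huinit : ∀ i j : ℤ, u 0 i j = u0 i j)
    (hubdd : ∃ B : ℝ, ∀ t : ℝ, 0 ≤ t → ∀ i j : ℤ, |u t i j| ≤ B)
    (husol : ∀ i j : ℤ, ∀ t : ℝ, 0 ≤ t →
      HasDerivWithinAt (fun s => u s i j) (acRHS g (u t) i j) (Set.Ici (0 : ℝ)) t)
    (hq0 : q0 ∈ Set.Ioo 0 a)
    -- limsup_{i→−∞} sup_j u⁰_{i,j} < q₀
    (hu0q0 : ∃ b : ℝ, b < q0 ∧ ∃ N : ℤ, ∀ i : ℤ, i ≤ N → ∀ j : ℤ, u0 i j ≤ b) :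
    ∀ t : ℝ, 0 < t →
      ∃ b : ℝ, b < q0 ∧ ∃ N : ℤ, ∀ i : ℤ, i ≤ N → ∀ j : ℤ, u t i j ≤ b :=
  left_tail_stays_below_q0_general g a u0 u q0 hg hgneg huinit hubdd husol hq0 hu0q0
end
end

section
/- Assume (Hg), (HΦ) and (H0), and let u : [0,∞) → ℓ^∞(ℤ²) be a bounded C¹ solution of the discrete Allen–Cahn equation with u(0)=u⁰. Then for every q₀ > 0 there exists T > 0 such that u_{i,j}(t) ≤ 1 + q₀/2 holds for every t ≥ T and every (i,j) ∈ ℤ². -/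
open Filter Topology MeasureTheory Set

noncomputable section

/-! Since `g < 0` above `1`, the spatially constant function
`v(t) = 1 + q₀/4 + (‖u‖_∞ + 3q₀/4) e^{-λt}`, with `λ` chosen so that `v' ≥ max g` on the range
of `v`, is a supersolution which starts above `u(0)` and decreases to `1 + q₀/4`.
On `ℤ²` the supremum of `u - v` need not be attained, so instead of a maximum principle we
iterate: with `K` a Lipschitz constant of `g`, `w = e^{(4+K)t}(u - v)` satisfies
`w'ᵢⱼ ≤ (4 + 2K) sup w⁺`, which bounds `w` on `[0, T]` by a constant times
`((4 + 2K) t)ⁿ / n!` for every `n`, hence `u ≤ v`. -/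

open Real NNReal Nat

lemma hasDerivAt_pow_succ_div_factorial (c t : ℝ) (n : ℕ) :
    HasDerivAt (fun t => (c * t) ^ (n + 1) / (n + 1)!) (c * ((c * t) ^ n / n !)) t := by
  refine ((((hasDerivAt_id t).const_mul c).fun_pow (n + 1)).div_const
    ((n + 1)! : ℝ)).congr_deriv ?_
  rw [factorial_succ]
  push_cast
  field_simp
  simp

lemma IsCompact.exists_pos_forall_le_neg {α : Type*} [TopologicalSpace α] {f : α → ℝ}
    {s : Set α} (hs : IsCompact s) (hf : ContinuousOn f s) (hneg : ∀ x ∈ s, f x < 0) :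
    ∃ m > 0, ∀ x ∈ s, f x ≤ -m := by
  rcases s.eq_empty_or_nonempty with rfl | hne
  · exact ⟨1, one_pos, by simp⟩
  obtain ⟨x, hx, hmax⟩ := hs.exists_isMaxOn hne hf
  exact ⟨-f x, neg_pos.2 (hneg x hx), fun y hy => by simpa using hmax hy⟩

def relaxation (x₀ x₁ m t : ℝ) : ℝ := x₀ + (x₁ - x₀) * exp (-(m / (x₁ - x₀)) * t)

section Relaxation

variable {x₀ x₁ m t : ℝ}

lemma relaxation_zero : relaxation x₀ x₁ m 0 = x₁ := by simp [relaxation]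

lemma hasDerivAt_relaxation (h : x₀ ≠ x₁) (t : ℝ) :
    HasDerivAt (relaxation x₀ x₁ m) (-m * exp (-(m / (x₁ - x₀)) * t)) t := by
  refine ((((hasDerivAt_id t).const_mul _).exp.const_mul (x₁ - x₀)).const_add x₀).congr_deriv ?_
  field_simp [sub_ne_zero.2 h.symm]
  simp

lemma exp_neg_div_sub_mul_le_one (h : x₀ ≤ x₁) (hm : 0 ≤ m) (ht : 0 ≤ t) :
    exp (-(m / (x₁ - x₀)) * t) ≤ 1 :=
  exp_le_one_iff.2 <| mul_nonpos_of_nonpos_of_nonneg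
    (neg_nonpos.2 (div_nonneg hm (sub_nonneg.2 h))) ht

lemma relaxation_mem_Icc (h : x₀ ≤ x₁) (hm : 0 ≤ m) (ht : 0 ≤ t) :
    relaxation x₀ x₁ m t ∈ Icc x₀ x₁ := by
  have hexp := exp_neg_div_sub_mul_le_one h hm ht
  constructor <;> unfold relaxation <;> nlinarith [exp_pos (-(m / (x₁ - x₀)) * t)]

lemma tendsto_relaxation (h : x₀ < x₁) (hm : 0 < m) :
    Tendsto (relaxation x₀ x₁ m) atTop (𝓝 x₀) := by
  have hdecay : Tendsto (fun t => exp (-(m / (x₁ - x₀)) * t)) atTop (𝓝 0) := by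
    simpa only [Function.comp_def, id, neg_mul] using
      tendsto_exp_neg_atTop_nhds_zero.comp (tendsto_id.const_mul_atTop (div_pos hm (sub_pos.2 h)))
  unfold relaxation
  simpa only [mul_zero, add_zero] using (hdecay.const_mul (x₁ - x₀)).const_add x₀

lemma apply_relaxation_le {g : ℝ → ℝ} (h : x₀ ≤ x₁) (hm : 0 ≤ m)
    (hg : ∀ x ∈ Icc x₀ x₁, g x ≤ -m) (ht : 0 ≤ t) :
    g (relaxation x₀ x₁ m t) ≤ -m * exp (-(m / (x₁ - x₀)) * t) := by
  nlinarith [hg _ (relaxation_mem_Icc h hm ht), exp_neg_div_sub_mul_le_one h hm ht]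

end Relaxation

def IsAllenCahnSolution (g : ℝ → ℝ) (u : ℝ → ℤ → ℤ → ℝ) : Prop :=
  ∀ i j : ℤ, ∀ t : ℝ, 0 ≤ t → HasDerivWithinAt (fun s => u s i j) (acRHS g (u t) i j) (Ici 0) t

section Comparison

variable {g : ℝ → ℝ} {K : ℝ≥0} {s : Set ℝ} {u : ℝ → ℤ → ℤ → ℝ} {v v' : ℝ → ℝ} {W : ℝ}

lemma weighted_acRHS_sub_le (hg : LipschitzOnWith K g s) {w : ℤ → ℤ → ℝ} {x E A : ℝ}
    {i j : ℤ} (hw : w i j ∈ s) (hx : x ∈ s) (hE : 0 ≤ E) (hA : 0 ≤ A)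
    (hwA : ∀ i j, E * (w i j - x) ≤ A) :
    E * ((4 + K) * (w i j - x) + (acRHS g w i j - g x)) ≤ (4 + 2 * K) * A := by
  have hlip : g (w i j) - g x ≤ K * |w i j - x| := by
    have := hg.dist_le_mul _ hw _ hx
    rw [Real.dist_eq, Real.dist_eq] at this
    exact (le_abs_self _).trans this
  have hplus : E * (w i j - x) + |E * (w i j - x)| ≤ 2 * A := by
    rcases le_total 0 (E * (w i j - x)) with h | h
    · rw [abs_of_nonneg h]; linarith [hwA i j]
    · rw [abs_of_nonpos h]; linarith
  calc E * ((4 + K) * (w i j - x) + (acRHS g w i j - g x))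
      ≤ E * (w (i + 1) j - x) + E * (w (i - 1) j - x) + E * (w i (j + 1) - x)
          + E * (w i (j - 1) - x) + K * (E * (w i j - x) + |E * (w i j - x)|) := by
        rw [abs_mul, abs_of_nonneg hE]
        unfold acRHS
        nlinarith [mul_le_mul_of_nonneg_left hlip hE]
    _ ≤ (4 + 2 * K) * A := by
        nlinarith [hwA (i + 1) j, hwA (i - 1) j, hwA i (j + 1), hwA i (j - 1), K.coe_nonneg]

lemma exp_mul_sub_le_pow_div_factorial (hg : LipschitzOnWith K g s)
    (hus : ∀ t, 0 ≤ t → ∀ i j, u t i j ∈ s) (hvs : ∀ t, 0 ≤ t → v t ∈ s)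
    (husol : IsAllenCahnSolution g u) (hv : ∀ t, HasDerivAt v (v' t) t)
    (hsuper : ∀ t, 0 ≤ t → g (v t) ≤ v' t)
    (hW : ∀ t, 0 ≤ t → ∀ i j, u t i j - v t ≤ W) (h0 : ∀ i j, u 0 i j ≤ v 0)
    {T : ℝ} (n : ℕ) {t : ℝ} (ht : t ∈ Icc 0 T) (i j : ℤ) :
    exp ((4 + K) * t) * (u t i j - v t)
      ≤ exp ((4 + K) * T) * max W 0 * (((4 + 2 * K) * t) ^ n / n !) := by
  induction n generalizing t i j with
  | zero =>
    simp only [pow_zero, factorial_zero, cast_one, div_one, mul_one]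
    calc exp ((4 + K) * t) * (u t i j - v t) ≤ exp ((4 + K) * t) * max W 0 := by
          gcongr; exact (hW t ht.1 i j).trans (le_max_left _ _)
      _ ≤ exp ((4 + K) * T) * max W 0 := by gcongr; exact ht.2
  | succ n ih =>
    set M := exp ((4 + K) * T) * max W 0
    have hf : ∀ x, 0 ≤ x → HasDerivWithinAt (fun t => exp ((4 + K) * t) * (u t i j - v t))
        (exp ((4 + K) * x) * ((4 + K) * (u x i j - v x) + (acRHS g (u x) i j - v' x)))
        (Ici 0) x := fun x hx => by
      refine ((((hasDerivAt_id x).const_mul _).exp.hasDerivWithinAt).mul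
        ((husol i j x hx).sub (hv x).hasDerivWithinAt)).congr_deriv ?_
      simp only [id, Pi.sub_apply]; ring
    have hB := fun x => (hasDerivAt_pow_succ_div_factorial (4 + 2 * K) x n).const_mul M
    refine image_le_of_deriv_right_le_deriv_boundary
      (fun x hx => (hf x hx.1).continuousWithinAt.mono Icc_subset_Ici_self)
      (fun x hx => (hf x hx.1).mono (Ici_subset_Ici.2 hx.1)) ?_
      (fun x _ => (hB x).continuousAt.continuousWithinAt) (fun x _ => (hB x).hasDerivWithinAt)
      (fun x hx => ?_) ht
    · simpa using h0 i j
    · have hx : x ∈ Icc 0 T := Ico_subset_Icc_self hx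
      calc exp ((4 + K) * x) * ((4 + K) * (u x i j - v x) + (acRHS g (u x) i j - v' x))
          ≤ exp ((4 + K) * x) * ((4 + K) * (u x i j - v x) + (acRHS g (u x) i j - g (v x))) := by
            gcongr; exact hsuper x hx.1
        _ ≤ (4 + 2 * K) * (M * (((4 + 2 * K) * x) ^ n / n !)) :=
            weighted_acRHS_sub_le hg (hus x hx.1 i j) (hvs x hx.1) (exp_pos _).le
              (by have := hx.1; positivity) (fun i j => ih hx i j)
        _ = M * ((4 + 2 * K) * (((4 + 2 * K) * x) ^ n / n !)) := by ring

theorem le_of_const_supersolution (hg : LipschitzOnWith K g s)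
    (hus : ∀ t, 0 ≤ t → ∀ i j, u t i j ∈ s) (hvs : ∀ t, 0 ≤ t → v t ∈ s)
    (husol : IsAllenCahnSolution g u) (hv : ∀ t, HasDerivAt v (v' t) t)
    (hsuper : ∀ t, 0 ≤ t → g (v t) ≤ v' t)
    (hW : ∀ t, 0 ≤ t → ∀ i j, u t i j - v t ≤ W) (h0 : ∀ i j, u 0 i j ≤ v 0)
    {t : ℝ} (ht : 0 ≤ t) (i j : ℤ) : u t i j ≤ v t := by
  have hlim := (FloorSemiring.tendsto_pow_div_factorial_atTop ((4 + 2 * K) * t)).const_mul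
    (exp ((4 + K) * t) * max W 0)
  rw [mul_zero] at hlim
  have hweighted : exp ((4 + K) * t) * (u t i j - v t) ≤ 0 := ge_of_tendsto' hlim fun n =>
    exp_mul_sub_le_pow_div_factorial hg hus hvs husol hv hsuper hW h0 n ⟨ht, le_rfl⟩ i j
  exact sub_nonpos.1 (nonpos_of_mul_nonpos_right hweighted (exp_pos _))

end Comparison

theorem solution_eventually_below_one_plus_half_q0_general
    (g : ℝ → ℝ) (a : ℝ) (u : ℝ → ℤ → ℤ → ℝ)
    -- (Hg): g is C² and bistable
    (hg : ContDiff ℝ 2 g)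
    (hgneg : ∀ s : ℝ, (0 < s ∧ s < a) ∨ 1 < s → g s < 0)
    -- u is a bounded C¹ solution of the discrete Allen-Cahn equation with u(0) = u⁰
    (hubdd : ∃ B : ℝ, ∀ t : ℝ, 0 ≤ t → ∀ i j : ℤ, |u t i j| ≤ B)
    (husol : ∀ i j : ℤ, ∀ t : ℝ, 0 ≤ t →
      HasDerivWithinAt (fun s => u s i j) (acRHS g (u t) i j) (Set.Ici (0 : ℝ)) t)
    :
    ∀ q0 : ℝ, 0 < q0 → ∃ T : ℝ, 0 < T ∧ ∀ t : ℝ, T ≤ t → ∀ i j : ℤ,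
      u t i j ≤ 1 + q0 / 2 := by
  intro q0 hq0
  obtain ⟨B, hB⟩ := hubdd
  have hB0 : 0 ≤ B := (abs_nonneg _).trans (hB 0 le_rfl 0 0)
  set x₀ := 1 + q0 / 4 with hx₀
  set x₁ := 1 + q0 + B
  have hx : x₀ < x₁ := by linarith
  obtain ⟨m, hm, hgm⟩ := isCompact_Icc.exists_pos_forall_le_neg hg.continuous.continuousOn
    fun x (hx : x ∈ Icc x₀ x₁) => hgneg x (Or.inr (by linarith [hx.1, hx₀]))
  obtain ⟨K, hK⟩ := (hg.of_le one_le_two).locallyLipschitz.locallyLipschitzOn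
    |>.exists_lipschitzOnWith_of_compact (isCompact_Icc (a := -x₁) (b := x₁))
  have hus : ∀ t, 0 ≤ t → ∀ i j, u t i j ∈ Icc (-x₁) x₁ := fun t ht i j => by
    have := abs_le.1 (hB t ht i j)
    constructor <;> linarith
  have hrel (t : ℝ) (ht : 0 ≤ t) := relaxation_mem_Icc (m := m) hx.le hm.le ht
  have hcomp : ∀ t, 0 ≤ t → ∀ i j, u t i j ≤ relaxation x₀ x₁ m t := fun t ht i j =>
    le_of_const_supersolution hK hus (fun t ht => Icc_subset_Icc (by linarith) le_rfl (hrel t ht))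
      husol (hasDerivAt_relaxation hx.ne) (fun t ht => apply_relaxation_le hx.le hm.le hgm ht)
      (W := B) (fun t ht i j => by linarith [(abs_le.1 (hB t ht i j)).2, (hrel t ht).1])
      (fun i j => by rw [relaxation_zero]; exact (hus 0 le_rfl i j).2) ht i j
  obtain ⟨T, hT⟩ := eventually_atTop.1 <|
    (tendsto_relaxation hx hm).eventually (gt_mem_nhds (show x₀ < 1 + q0 / 2 by linarith))
  exact ⟨max T 1, by positivity, fun t ht i j =>
    (hcomp t (by linarith [le_max_right T 1]) i j).trans (hT t (le_of_max_le_left ht)).le⟩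

theorem solution_eventually_below_one_plus_half_q0
    (g : ℝ → ℝ) (a c : ℝ) (Φ : ℝ → ℝ) (u0 : ℤ → ℤ → ℝ) (u : ℝ → ℤ → ℤ → ℝ)
    -- (Hg): g is C² and bistable
    (hg : ContDiff ℝ 2 g) (ha : a ∈ Set.Ioo (0 : ℝ) 1)
    (hg0 : g 0 = 0) (hga : g a = 0) (hg1 : g 1 = 0)
    (hdg0 : deriv g 0 < 0) (hdg1 : deriv g 1 < 0)
    (hgpos : ∀ s : ℝ, s < 0 ∨ (a < s ∧ s < 1) → 0 < g s)
    (hgneg : ∀ s : ℝ, (0 < s ∧ s < a) ∨ 1 < s → g s < 0)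
    -- (HΦ): horizontal travelling wave with nonzero speed
    (hc : c ≠ 0) (hPhiC1 : ContDiff ℝ 1 Φ) (hPhimono : StrictMono Φ)
    (hPhibot : Tendsto Φ atBot (nhds 0)) (hPhitop : Tendsto Φ atTop (nhds 1))
    (hPhihalf : Φ 0 = 1 / 2)
    (hPhieq : ∀ ξ : ℝ, -c * deriv Φ ξ = Φ (ξ + 1) + Φ (ξ - 1) - 2 * Φ ξ + g (Φ ξ))
    -- (H0): bounded front-like initial condition
    (hu0bdd : ∃ B : ℝ, ∀ i j : ℤ, |u0 i j| ≤ B)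
    (hu0left : ∃ b : ℝ, b < a ∧ ∃ N : ℤ, ∀ i : ℤ, i ≤ N → ∀ j : ℤ, u0 i j ≤ b)
    (hu0right : ∃ b : ℝ, a < b ∧ ∃ N : ℤ, ∀ i : ℤ, N ≤ i → ∀ j : ℤ, b ≤ u0 i j)
    -- u is a bounded C¹ solution of the discrete Allen-Cahn equation with u(0) = u⁰
    (huinit : ∀ i j : ℤ, u 0 i j = u0 i j)
    (hubdd : ∃ B : ℝ, ∀ t : ℝ, 0 ≤ t → ∀ i j : ℤ, |u t i j| ≤ B)
    (husol : ∀ i j : ℤ, ∀ t : ℝ, 0 ≤ t →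
      HasDerivWithinAt (fun s => u s i j) (acRHS g (u t) i j) (Set.Ici (0 : ℝ)) t)
    :
    ∀ q0 : ℝ, 0 < q0 → ∃ T : ℝ, 0 < T ∧ ∀ t : ℝ, T ≤ t → ∀ i j : ℤ,
      u t i j ≤ 1 + q0 / 2 :=
  solution_eventually_below_one_plus_half_q0_general g a u hg hgneg hubdd husol
end
end

section
/- Let I_k(t) = (1/π)∫₀^π e^{t cos ω} cos(kω) dω for k ∈ ℤ and t > 0. Then there exists a constant C > 0 such that for every integer k ≥ 0 and every t > 0: I_k(t) ≤ C e^t / √t, and 0 < I_k(t) − I_{k+1}(t) ≤ C e^t / t. -/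
/-!
With `l = t/2` and `q(n) = lⁿ/n!`, multiplying the series of `exp (l e^{iω})` and `exp (l e^{-iω})`
gives `I_k(t) = ∑ₙ q(n) q(n+k)`. As `q` is log-concave, a two-by-two Cauchy–Binet expansion shows
that `k ↦ I_k(t)` is log-concave on `k ≥ 0`; together with `I_1 < I_0` this makes it strictly
decreasing. For the upper bounds, Jordan's inequality `cos ω ≤ 1 - 2ω²/π²` on `[0, π]` dominates
`e^{t cos ω}` by the Gaussian `e^t e^{-2tω²/π²}`, whose integral is `O(1/√t)`; for the difference,
`cos kω - cos (k+1)ω ≤ ω` and `∫₀^∞ ω e^{-bω²} dω = 1/(2b)` give `O(e^t/t)`.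
-/

open Filter Topology Set intervalIntegral

noncomputable section

/-- The modified Bessel function of the first kind of integer order `k`. -/
def besselI (k : ℤ) (t : ℝ) : ℝ :=
  (1 / Real.pi) * ∫ ω in (0 : ℝ)..Real.pi, Real.exp (t * Real.cos ω) * Real.cos ((k : ℝ) * ω)

open Real Nat

def expCoeff (x : ℝ) (n : ℕ) : ℝ := x ^ n / n !

lemma expCoeff_nonneg {x : ℝ} (hx : 0 ≤ x) (n : ℕ) : 0 ≤ expCoeff x n := by
  unfold expCoeff; positivity

lemma expCoeff_pos {x : ℝ} (hx : 0 < x) (n : ℕ) : 0 < expCoeff x n := by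
  unfold expCoeff; positivity

@[simp] lemma expCoeff_zero (x : ℝ) : expCoeff x 0 = 1 := by simp [expCoeff]

lemma expCoeff_succ (x : ℝ) (n : ℕ) : expCoeff x (n + 1) = x / (n + 1) * expCoeff x n := by
  rw [expCoeff, expCoeff, factorial_succ, pow_succ]
  push_cast
  field_simp

lemma expCoeff_succ_mul_le {x : ℝ} (hx : 0 ≤ x) {a b : ℕ} (hab : a ≤ b) :
    expCoeff x (b + 1) * expCoeff x a ≤ expCoeff x (a + 1) * expCoeff x b := by
  have hratio : x / (b + 1) ≤ x / (a + 1) := by gcongr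
  calc expCoeff x (b + 1) * expCoeff x a = x / (b + 1) * (expCoeff x a * expCoeff x b) := by
        rw [expCoeff_succ]; ring
    _ ≤ x / (a + 1) * (expCoeff x a * expCoeff x b) := by
        gcongr
        exact mul_nonneg (expCoeff_nonneg hx a) (expCoeff_nonneg hx b)
    _ = expCoeff x (a + 1) * expCoeff x b := by rw [expCoeff_succ]; ring

lemma summable_norm_expCoeff (x : ℝ) : Summable fun n => ‖expCoeff x n‖ :=
  NormedSpace.norm_expSeries_div_summable x

lemma hasSum_expCoeff_mul_exp_mul_I (x ω : ℝ) :
    HasSum (fun n : ℕ => (expCoeff x n : ℂ) * Complex.exp (n * ω * Complex.I))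
      (Complex.exp (x * Complex.exp (ω * Complex.I))) := by
  have h := NormedSpace.expSeries_div_hasSum_exp (x * Complex.exp (ω * Complex.I))
  rw [← Complex.exp_eq_exp_ℂ] at h
  have e : (fun n : ℕ => (x * Complex.exp (ω * Complex.I)) ^ n / n !) =
      fun n : ℕ => (expCoeff x n : ℂ) * Complex.exp (n * ω * Complex.I) := by
    ext n
    rw [mul_pow, ← Complex.exp_nat_mul, expCoeff]
    push_cast
    ring_nf
  exact e ▸ h

lemma hasSum_exp_mul_cos_mul_cos (t ω : ℝ) (k : ℤ) :
    HasSum (fun p : ℕ × ℕ => expCoeff (t / 2) p.1 * expCoeff (t / 2) p.2 *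
      cos (((p.1 - p.2 + k : ℤ) : ℝ) * ω)) (exp (t * cos ω) * cos (k * ω)) := by
  have h₁ := hasSum_expCoeff_mul_exp_mul_I (t / 2) ω
  have h₂ := hasSum_expCoeff_mul_exp_mul_I (t / 2) (-ω)
  have hs := summable_mul_of_summable_norm h₁.summable.norm h₂.summable.norm
  have hprod := (h₁.mul h₂ hs).mul_right (Complex.exp (k * ω * Complex.I))
  have hre := Complex.reCLM.hasSum hprod
  have hterm : ∀ p : ℕ × ℕ, (expCoeff (t / 2) p.1 : ℂ) * Complex.exp (p.1 * ω * Complex.I) *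
      ((expCoeff (t / 2) p.2 : ℂ) * Complex.exp (p.2 * (-ω : ℝ) * Complex.I)) *
      Complex.exp (k * ω * Complex.I) = ((expCoeff (t / 2) p.1 * expCoeff (t / 2) p.2 : ℝ) : ℂ) *
      Complex.exp ((((p.1 - p.2 + k : ℤ) : ℝ) * ω : ℝ) * Complex.I) := by
    intro p
    push_cast
    rw [mul_mul_mul_comm, mul_assoc, ← Complex.exp_add, ← Complex.exp_add]
    ring_nf
  have hsum : Complex.exp ((t / 2 : ℝ) * Complex.exp (ω * Complex.I)) *
      Complex.exp ((t / 2 : ℝ) * Complex.exp ((-ω : ℝ) * Complex.I)) *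
      Complex.exp (k * ω * Complex.I) =
        ((exp (t * cos ω) : ℝ) : ℂ) * Complex.exp ((k * ω : ℝ) * Complex.I) := by
    have hexponent : ((t / 2 : ℝ) : ℂ) * Complex.exp (ω * Complex.I) +
        ((t / 2 : ℝ) : ℂ) * Complex.exp ((-ω : ℝ) * Complex.I) = ((t * cos ω : ℝ) : ℂ) := by
      rw [← mul_add, Complex.ofReal_neg, ← Complex.two_cos]
      push_cast
      ring
    rw [← Complex.exp_add, hexponent, Complex.ofReal_exp]
    push_cast
    ring_nf
  simpa only [Complex.reCLM_apply, hterm, hsum, Complex.re_ofReal_mul,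
    Complex.exp_ofReal_mul_I_re] using hre

lemma integral_cos_intCast_mul (N : ℤ) :
    ∫ ω in (0 : ℝ)..π, cos (N * ω) = if N = 0 then π else 0 := by
  split_ifs with hN
  · simp [hN]
  · rw [intervalIntegral.integral_comp_mul_left _ (by exact_mod_cast hN), integral_cos,
      mul_zero, sin_zero, sin_int_mul_pi, sub_zero, smul_zero]

lemma hasSum_besselI (k : ℕ) (t : ℝ) :
    HasSum (fun n => expCoeff (t / 2) n * expCoeff (t / 2) (n + k)) (besselI k t) := by
  set c := expCoeff (t / 2)
  have hbound : Summable fun p : ℕ × ℕ => ‖c p.1 * c p.2‖ :=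
    (summable_norm_expCoeff _).mul_norm (summable_norm_expCoeff _)
  have hterms : HasSum (fun p : ℕ × ℕ =>
      ∫ ω in (0 : ℝ)..π, c p.1 * c p.2 * cos (((p.1 - p.2 + k : ℤ) : ℝ) * ω))
      (∫ ω in (0 : ℝ)..π, exp (t * cos ω) * cos (k * ω)) := by
    refine intervalIntegral.hasSum_integral_of_dominated_convergence (fun p _ => ‖c p.1 * c p.2‖)
      (fun p => ?_) (fun p => ?_) ?_ intervalIntegrable_const ?_
    · exact Continuous.aestronglyMeasurable (by fun_prop)
    · refine .of_forall fun ω _ => ?_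
      rw [norm_mul, Real.norm_eq_abs (cos _)]
      exact mul_le_of_le_one_right (norm_nonneg _) (abs_cos_le_one _)
    · exact .of_forall fun _ _ => hbound
    · exact .of_forall fun ω _ => hasSum_exp_mul_cos_mul_cos t ω k
  simp only [intervalIntegral.integral_const_mul, integral_cos_intCast_mul] at hterms
  have hdiag : HasSum (fun n => c n * c (n + k) * π)
      (∫ ω in (0 : ℝ)..π, exp (t * cos ω) * cos (k * ω)) := by
    rw [← (Function.Injective.hasSum_iff (g := fun n => (n, n + k)) _ _)] at hterms
    · convert hterms using 1
      ext n
      simp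
    · intro a b h; simpa using h
    · rintro ⟨a, b⟩ hab
      rw [if_neg, mul_zero]
      contrapose! hab
      exact ⟨a, by simp; omega⟩
  simpa [besselI, mul_div_assoc, div_eq_inv_mul, mul_comm] using hdiag.div_const π

lemma mul_le_mul_of_hasSum_of_antitone_ratio {ι : Type*} [LinearOrder ι] {x y u v : ι → ℝ}
    {A B C D : ℝ} (hx : 0 ≤ x) (hy : 0 ≤ y) (hu : 0 ≤ u) (hv : 0 ≤ v)
    (hxy : ∀ i j, i ≤ j → x j * y i ≤ x i * y j) (huv : ∀ i j, i ≤ j → u j * v i ≤ u i * v j)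
    (hA : HasSum (fun i => x i * u i) A) (hB : HasSum (fun i => y i * v i) B)
    (hC : HasSum (fun i => x i * v i) C) (hD : HasSum (fun i => y i * u i) D) :
    C * D ≤ A * B := by
  have hsAB : Summable fun p : ι × ι => x p.1 * u p.1 * (y p.2 * v p.2) :=
    hA.summable.mul_of_nonneg hB.summable (fun i => mul_nonneg (hx i) (hu i))
      (fun i => mul_nonneg (hy i) (hv i))
  have hsCD : Summable fun p : ι × ι => x p.1 * v p.1 * (y p.2 * u p.2) :=
    hC.summable.mul_of_nonneg hD.summable (fun i => mul_nonneg (hx i) (hv i))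
      (fun i => mul_nonneg (hy i) (hu i))
  have hAB := hA.mul hB hsAB
  have hCD := hC.mul hD hsCD
  have hAB' : HasSum (fun p : ι × ι => x p.2 * u p.2 * (y p.1 * v p.1)) (A * B) :=
    (Equiv.prodComm ι ι).hasSum_iff.mpr hAB |>.congr_fun fun _ => rfl
  have hCD' : HasSum (fun p : ι × ι => x p.2 * v p.2 * (y p.1 * u p.1)) (C * D) :=
    (Equiv.prodComm ι ι).hasSum_iff.mpr hCD |>.congr_fun fun _ => rfl
  -- Cauchy–Binet: `2 (A B - C D) = ∑ᵢⱼ (xᵢ yⱼ - xⱼ yᵢ) (uᵢ vⱼ - uⱼ vᵢ)`.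
  have hcross := (((hAB.sub hCD).sub hCD').add hAB').congr_fun (g := fun p : ι × ι =>
    (x p.1 * y p.2 - x p.2 * y p.1) * (u p.1 * v p.2 - u p.2 * v p.1)) fun p => by ring
  have hnonneg : ∀ p : ι × ι, 0 ≤ (x p.1 * y p.2 - x p.2 * y p.1) *
      (u p.1 * v p.2 - u p.2 * v p.1) := by
    rintro ⟨i, j⟩
    rcases le_total i j with h | h
    · exact mul_nonneg (sub_nonneg.2 (by linarith [hxy i j h])) (sub_nonneg.2 (huv i j h))
    · exact mul_nonneg_of_nonpos_of_nonpos (sub_nonpos.2 (hxy j i h)) (sub_nonpos.2 (huv j i h))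
  linarith [hcross.nonneg hnonneg]

lemma besselI_pos (k : ℕ) {t : ℝ} (ht : 0 < t) : 0 < besselI k t := by
  have hc := expCoeff_pos (half_pos ht)
  have hterm : ∀ n, 0 < expCoeff (t / 2) n * expCoeff (t / 2) (n + k) :=
    fun n => mul_pos (hc n) (hc (n + k))
  exact hasSum_lt (f := 0) (fun n => (hterm n).le) (hterm 0) hasSum_zero (hasSum_besselI k t)

lemma besselI_mul_besselI_le_sq (k : ℕ) {t : ℝ} (ht : 0 ≤ t) :
    besselI k t * besselI (k + 2 : ℕ) t ≤ besselI (k + 1 : ℕ) t ^ 2 := by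
  set c := expCoeff (t / 2)
  have hc : 0 ≤ c := expCoeff_nonneg (by positivity)
  let shift : ℕ → ℝ := fun | 0 => 0 | n + 1 => c n
  have hshift : 0 ≤ shift := by
    rintro (_ | n)
    · rfl
    · exact hc n
  have hasSum_shift (m : ℕ) :
      HasSum (fun n => shift n * c (n + m)) (besselI (m + 1 : ℕ) t) := by
    rw [← hasSum_nat_add_iff' 1]
    simpa [shift, add_right_comm _ 1 m, add_assoc] using hasSum_besselI (m + 1) t
  rw [sq]
  refine mul_le_mul_of_hasSum_of_antitone_ratio (u := fun n => c (n + (k + 1)))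
    (v := fun n => c (n + k)) hc hshift (fun n => hc (n + (k + 1))) (fun n => hc (n + k)) ?_ ?_
    (hasSum_besselI (k + 1) t) (hasSum_shift k) (hasSum_besselI k t) (hasSum_shift (k + 1))
  · rintro (_ | i) (_ | j) hij
    · simp [shift]
    · simpa [shift] using mul_nonneg (hc 0) (hc j)
    · omega
    · exact expCoeff_succ_mul_le (by positivity) (by omega)
  · intro i j hij
    simpa [add_assoc] using expCoeff_succ_mul_le (x := t / 2) (by positivity)
      (show i + k ≤ j + k by omega)

lemma besselI_one_lt_besselI_zero (t : ℝ) : besselI (1 : ℕ) t < besselI (0 : ℕ) t := by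
  set c := expCoeff (t / 2)
  have h₀ : HasSum (fun n => c n * c n) (besselI (0 : ℕ) t) := hasSum_besselI 0 t
  have h₀' : HasSum (fun n => c (n + 1) * c (n + 1)) (besselI (0 : ℕ) t - 1) := by
    have := (hasSum_nat_add_iff' 1).mpr h₀
    simpa [c] using this
  have h₁ : HasSum (fun n => 2 * (c n * c (n + 1))) (2 * besselI (1 : ℕ) t) :=
    (hasSum_besselI 1 t).mul_left 2
  have hle : ∀ n, 2 * (c n * c (n + 1)) ≤ c n * c n + c (n + 1) * c (n + 1) := fun n => by
    nlinarith [sq_nonneg (c n - c (n + 1))]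
  linarith [hasSum_le hle h₁ (h₀.add h₀')]

lemma strictAnti_of_mul_le_sq {a : ℕ → ℝ} (hpos : ∀ n, 0 < a n)
    (hlc : ∀ n, a n * a (n + 2) ≤ a (n + 1) ^ 2) (h₁₀ : a 1 < a 0) : StrictAnti a := by
  have hratio : Antitone fun n => a (n + 1) / a n := antitone_nat_of_succ_le fun n => by
    rw [div_le_div_iff₀ (hpos _) (hpos _)]
    linarith [hlc n]
  refine strictAnti_nat_of_succ_lt fun n => (div_lt_one (hpos n)).1 ?_
  exact (hratio n.zero_le).trans_lt ((div_lt_one (hpos 0)).2 h₁₀)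

lemma strictAnti_besselI {t : ℝ} (ht : 0 < t) : StrictAnti fun k : ℕ => besselI k t :=
  strictAnti_of_mul_le_sq (fun k => besselI_pos k ht)
    (fun k => besselI_mul_besselI_le_sq k ht.le) (besselI_one_lt_besselI_zero t)

lemma exp_mul_cos_le {t ω : ℝ} (ht : 0 ≤ t) (hω : |ω| ≤ π) :
    exp (t * cos ω) ≤ exp t * exp (-(2 * t / π ^ 2) * ω ^ 2) := by
  rw [← exp_add, exp_le_exp]
  calc t * cos ω ≤ t * (1 - 2 / π ^ 2 * ω ^ 2) :=
        mul_le_mul_of_nonneg_left (cos_le_one_sub_mul_cos_sq hω) ht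
    _ = t + -(2 * t / π ^ 2) * ω ^ 2 := by ring

lemma integral_exp_mul_cos_mul_le {t : ℝ} (ht : 0 ≤ t) {g h : ℝ → ℝ} (hg : Continuous g)
    (hh : Continuous h) (hgh : ∀ ω ∈ Icc 0 π, g ω ≤ h ω) (hh₀ : ∀ ω ∈ Icc 0 π, 0 ≤ h ω) :
    ∫ ω in (0 : ℝ)..π, exp (t * cos ω) * g ω ≤
      exp t * ∫ ω in (0 : ℝ)..π, exp (-(2 * t / π ^ 2) * ω ^ 2) * h ω := by
  rw [← integral_const_mul]
  refine integral_mono_on pi_pos.le ((by fun_prop : Continuous _).intervalIntegrable _ _)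
    ((by fun_prop : Continuous _).intervalIntegrable _ _) fun ω hω => ?_
  have hω' : |ω| ≤ π := abs_le.2 ⟨by linarith [hω.1, pi_pos], hω.2⟩
  calc exp (t * cos ω) * g ω ≤ exp (t * cos ω) * h ω :=
        mul_le_mul_of_nonneg_left (hgh ω hω) (exp_pos _).le
    _ ≤ exp t * exp (-(2 * t / π ^ 2) * ω ^ 2) * h ω :=
        mul_le_mul_of_nonneg_right (exp_mul_cos_le ht hω') (hh₀ ω hω)
    _ = _ := mul_assoc _ _ _

lemma integral_exp_neg_mul_sq_le {b : ℝ} (hb : 0 < b) {a : ℝ} (ha : 0 ≤ a) :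
    ∫ ω in (0 : ℝ)..a, exp (-b * ω ^ 2) ≤ √(π / b) / 2 := by
  rw [← integral_gaussian_Ioi, integral_of_le ha]
  exact MeasureTheory.setIntegral_mono_set (integrable_exp_neg_mul_sq hb).integrableOn
    (.of_forall fun _ => (exp_pos _).le) Ioc_subset_Ioi_self.eventuallyLE

lemma integral_exp_neg_mul_sq_mul_self_le {b : ℝ} (hb : 0 < b) (a : ℝ) :
    ∫ ω in (0 : ℝ)..a, exp (-b * ω ^ 2) * ω ≤ 1 / (2 * b) := by
  have hderiv (ω : ℝ) :
      HasDerivAt (fun ω => -exp (-b * ω ^ 2) / (2 * b)) (exp (-b * ω ^ 2) * ω) ω := by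
    refine (((hasDerivAt_pow 2 ω).const_mul (-b)).exp.neg.div_const (2 * b)).congr_deriv ?_
    field_simp
    ring
  rw [integral_eq_sub_of_hasDerivAt (fun ω _ => hderiv ω)
    ((by fun_prop : Continuous _).intervalIntegrable _ _)]
  have := exp_pos (-b * a ^ 2)
  simp only [mul_zero, zero_pow two_ne_zero, exp_zero]
  rw [div_sub_div_same, div_le_div_iff_of_pos_right (by positivity)]
  linarith

lemma besselI_le (k : ℤ) {t : ℝ} (ht : 0 < t) : besselI k t ≤ √(π / 8) * exp t / √t := by
  have hb : 0 < 2 * t / π ^ 2 := by positivity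
  have hint := integral_exp_mul_cos_mul_le ht.le (g := fun ω => cos (k * ω)) (h := fun _ => 1)
    (by fun_prop) (by fun_prop) (fun ω _ => cos_le_one _) (fun _ _ => zero_le_one)
  simp only [mul_one] at hint
  have hgauss := integral_exp_neg_mul_sq_le hb pi_pos.le
  have hsqrt : √(π / (2 * t / π ^ 2)) / 2 = π * (√(π / 8) / √t) := by
    have hsq : π / (2 * t / π ^ 2) = (2 * (π * (√(π / 8) / √t))) ^ 2 := by
      rw [mul_pow, mul_pow, div_pow, sq_sqrt (by positivity), sq_sqrt ht.le]
      field_simp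
      ring
    rw [hsq, sqrt_sq (by positivity)]
    ring
  calc besselI k t ≤ 1 / π * (exp t * (√(π / (2 * t / π ^ 2)) / 2)) := by
        unfold besselI
        gcongr
        exact hint.trans (mul_le_mul_of_nonneg_left hgauss (exp_pos t).le)
    _ = √(π / 8) * exp t / √t := by
        rw [hsqrt]
        field_simp

lemma besselI_sub_besselI_add_one_le (k : ℤ) {t : ℝ} (ht : 0 < t) :
    besselI k t - besselI (k + 1) t ≤ π / 4 * exp t / t := by
  have hb : 0 < 2 * t / π ^ 2 := by positivity
  have hint := integral_exp_mul_cos_mul_le ht.le (g := fun ω => cos (k * ω) - cos ((k + 1) * ω))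
    (h := fun ω => ω) (by fun_prop) (by fun_prop) (fun ω hω => ?_) (fun ω hω => hω.1)
  swap
  · calc cos (k * ω) - cos ((k + 1) * ω) ≤ |k * ω - (k + 1) * ω| :=
          (le_abs_self _).trans (abs_cos_sub_cos_le _ _)
      _ = ω := by rw [show k * ω - (k + 1) * ω = -ω by ring, abs_neg, abs_of_nonneg hω.1]
  calc besselI k t - besselI (k + 1) t
      = 1 / π * ∫ ω in (0 : ℝ)..π, exp (t * cos ω) * (cos (k * ω) - cos ((k + 1) * ω)) := by
        unfold besselI
        rw [← mul_sub, ← integral_sub ((by fun_prop : Continuous _).intervalIntegrable _ _)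
          ((by fun_prop : Continuous _).intervalIntegrable _ _)]
        push_cast
        simp only [mul_sub]
    _ ≤ 1 / π * (exp t * (1 / (2 * (2 * t / π ^ 2)))) := by
        gcongr
        exact hint.trans (mul_le_mul_of_nonneg_left
          (integral_exp_neg_mul_sq_mul_self_le hb π) (exp_pos t).le)
    _ = π / 4 * exp t / t := by
        field_simp
        ring

theorem besselI_bounds :
    ∃ C : ℝ, 0 < C ∧ ∀ k : ℤ, 0 ≤ k → ∀ t : ℝ, 0 < t →
      besselI k t ≤ C * Real.exp t / Real.sqrt t ∧
      0 < besselI k t - besselI (k + 1) t ∧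
      besselI k t - besselI (k + 1) t ≤ C * Real.exp t / t := by
  refine ⟨π, pi_pos, fun k hk t ht => ⟨?_, ?_, ?_⟩⟩
  · calc besselI k t ≤ √(π / 8) * exp t / √t := besselI_le k ht
      _ ≤ π * exp t / √t := by
        gcongr
        rw [sqrt_le_iff]
        constructor <;> nlinarith [pi_gt_three]
  · lift k to ℕ using hk
    have := strictAnti_besselI ht k.lt_succ_self
    push_cast at this
    linarith
  · calc besselI k t - besselI (k + 1) t ≤ π / 4 * exp t / t :=
          besselI_sub_besselI_add_one_le k ht
      _ ≤ π * exp t / t := by gcongr; linarith [pi_pos]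
end
end

section
/- Fix c, d ∈ ℝ. Then there exists δ > 0 such that for any pair of C¹ functions Γ⁻, Γ⁺ : [0,∞) → ℓ^∞(ℤ) satisfying: (a) Γ⁻ is a sub-solution of the discrete mean curvature flow; (b) Γ⁺ is a super-solution of the discrete mean curvature flow; (c) ‖∂⁺Γ⁻(t)‖_{ℓ^∞} ≤ δ and ‖∂⁺Γ⁺(t)‖_{ℓ^∞} ≤ δ for every t ≥ 0; (d) Γ⁻_j(0) ≤ Γ⁺_j(0) for every j ∈ ℤ; one has Γ⁻_j(t) ≤ Γ⁺_j(t) for every j ∈ ℤ and every t ≥ 0. -/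
/-!
Write the right-hand side as `G(∂⁺Γ_j, ∂⁻Γ_j)`. For slopes at most `δ = 1 / (4 (|d| + 1))`, `G` is
increasing in the first slope and decreasing in the second, with difference quotients at most `3`.
So `u = Γ⁻ - Γ⁺` satisfies `u̇_j ≤ 6 (S - u_j)` for every upper bound `S` of `u(t)`, and `u` is
bounded. Since ℤ has no maximal site, the maximum principle is run against the barrier `ε t` over
time steps of a fixed length `η`: during a step every `u_j` rises by at most `M η`, `M` a bound
for `u̇`, so where `u_j` touches the barrier `u̇_j ≤ 6 M η < ε`. Letting `ε → 0` gives `u ≤ 0`.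
-/

open Filter Topology Set

noncomputable section

/-- Right-hand side of the discrete mean curvature flow
`Γ̇_j = (∂⁽²⁾Γ)_j / (β_Γ)_j² + 2 d (β_Γ)_j + c − 2 d`. -/
def mcfRHS (c d : ℝ) (Γ : ℤ → ℝ) (j : ℤ) : ℝ :=
  (Γ (j + 1) - 2 * Γ j + Γ (j - 1)) /
      (1 + ((Γ (j + 1) - Γ j) ^ 2 + (Γ j - Γ (j - 1)) ^ 2) / 2)
    + 2 * d * Real.sqrt (1 + ((Γ (j + 1) - Γ j) ^ 2 + (Γ j - Γ (j - 1)) ^ 2) / 2)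
    + c - 2 * d

-- `β_Γ` at `j` as a function of the slopes `p = (∂⁺Γ)_j` and `q = (∂⁻Γ)_j`
def mcfBeta (p q : ℝ) : ℝ :=
  Real.sqrt (1 + (p ^ 2 + q ^ 2) / 2)

def mcfRHSOfSlopes (d p q : ℝ) : ℝ :=
  (p - q) / mcfBeta p q ^ 2 + 2 * d * mcfBeta p q

lemma mcfBeta_sq (p q : ℝ) : mcfBeta p q ^ 2 = 1 + (p ^ 2 + q ^ 2) / 2 :=
  Real.sq_sqrt (by positivity)

lemma one_le_mcfBeta (p q : ℝ) : 1 ≤ mcfBeta p q :=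
  Real.one_le_sqrt.2 (le_add_of_nonneg_right (by positivity))

lemma mcfBeta_sq_le {p q : ℝ} (hp : |p| ≤ 1 / 4) (hq : |q| ≤ 1 / 4) :
    mcfBeta p q ^ 2 ≤ 17 / 16 := by
  rw [mcfBeta_sq]
  nlinarith [sq_abs p, sq_abs q, abs_nonneg p, abs_nonneg q]

lemma mcfBeta_neg_swap (p q : ℝ) : mcfBeta (-q) (-p) = mcfBeta p q := by
  simp only [mcfBeta, neg_sq, add_comm (q ^ 2)]

lemma mcfRHSOfSlopes_neg_swap (d p q : ℝ) :
    mcfRHSOfSlopes d (-q) (-p) = mcfRHSOfSlopes d p q := by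
  simp only [mcfRHSOfSlopes, mcfBeta_neg_swap]
  ring

lemma mcfRHSOfSlopes_sub_mcfRHSOfSlopes (d p P q : ℝ) :
    mcfRHSOfSlopes d P q - mcfRHSOfSlopes d p q =
      ((mcfBeta p q ^ 2 - (p - q) * (P + p) / 2) / (mcfBeta p q ^ 2 * mcfBeta P q ^ 2)
        + d * (P + p) / (mcfBeta p q + mcfBeta P q)) * (P - p) := by
  have h₁ := one_le_mcfBeta p q
  have h₂ := one_le_mcfBeta P q
  have : mcfBeta p q ≠ 0 := by positivity
  have : mcfBeta P q ≠ 0 := by positivity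
  have : mcfBeta p q + mcfBeta P q ≠ 0 := by positivity
  have hsq : mcfBeta P q ^ 2 - mcfBeta p q ^ 2 = (P ^ 2 - p ^ 2) / 2 := by
    rw [mcfBeta_sq, mcfBeta_sq]; ring
  have hquot : (P - q) / mcfBeta P q ^ 2 - (p - q) / mcfBeta p q ^ 2 =
      (mcfBeta p q ^ 2 - (p - q) * (P + p) / 2) / (mcfBeta p q ^ 2 * mcfBeta P q ^ 2)
        * (P - p) := by
    field_simp
    linear_combination 2 * (q - p) * hsq
  have hbeta : 2 * d * mcfBeta P q - 2 * d * mcfBeta p q =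
      d * (P + p) / (mcfBeta p q + mcfBeta P q) * (P - p) := by
    field_simp
    linear_combination 2 * d * hsq
  simp only [mcfRHSOfSlopes]
  linear_combination hquot + hbeta

lemma exists_mcfRHSOfSlopes_sub_eq_mul {d δ p P q : ℝ} (hδ : δ ≤ 1 / 4) (hdδ : |d| * δ ≤ 1 / 4)
    (hp : |p| ≤ δ) (hP : |P| ≤ δ) (hq : |q| ≤ δ) :
    ∃ κ, 0 ≤ κ ∧ κ ≤ 3 ∧ mcfRHSOfSlopes d P q - mcfRHSOfSlopes d p q = κ * (P - p) := by
  have hp' := hp.trans hδ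
  have hP' := hP.trans hδ
  have hq' := hq.trans hδ
  have hβ₁ := one_le_mcfBeta p q
  have hβ₂ := one_le_mcfBeta P q
  have hβ₁sq := mcfBeta_sq_le hp' hq'
  have hβ₂sq := mcfBeta_sq_le hP' hq'
  have hquot : 1 / 4 ≤ (mcfBeta p q ^ 2 - (p - q) * (P + p) / 2) /
      (mcfBeta p q ^ 2 * mcfBeta P q ^ 2) ∧
      (mcfBeta p q ^ 2 - (p - q) * (P + p) / 2) / (mcfBeta p q ^ 2 * mcfBeta P q ^ 2) ≤ 5 / 2 := by
    have hcross : |(p - q) * (P + p)| ≤ 1 / 4 := by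
      rw [abs_mul]
      nlinarith [abs_sub p q, abs_add_le P p, abs_nonneg (p - q), abs_nonneg (P + p)]
    have := abs_le.1 hcross
    have hD₁ : 1 ≤ mcfBeta p q ^ 2 * mcfBeta P q ^ 2 :=
      one_le_mul_of_one_le_of_one_le (one_le_pow₀ hβ₁) (one_le_pow₀ hβ₂)
    have hD₂ : mcfBeta p q ^ 2 * mcfBeta P q ^ 2 ≤ 2 := by nlinarith
    constructor
    · rw [le_div_iff₀ (by positivity)]; nlinarith
    · rw [div_le_iff₀ (by positivity)]; linarith
  have hbeta : |d * (P + p) / (mcfBeta p q + mcfBeta P q)| ≤ 1 / 4 := by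
    have hsum : 0 < mcfBeta p q + mcfBeta P q := by linarith
    rw [abs_div, abs_mul, abs_of_pos hsum, div_le_iff₀ hsum]
    nlinarith [abs_add_le P p, abs_nonneg d]
  have := abs_le.1 hbeta
  exact ⟨_, by linarith, by linarith, mcfRHSOfSlopes_sub_mcfRHSOfSlopes d p P q⟩

section ComparisonPrinciple

variable {ι : Type*} {u u' : ℝ → ι → ℝ} {M L : ℝ}

lemma le_add_mul_sub_of_deriv_le
    (hu : ∀ i t, 0 ≤ t → HasDerivWithinAt (fun s => u s i) (u' t i) (Ici 0) t)
    (hM : ∀ i t, 0 ≤ t → u' t i ≤ M) {a b : ℝ} (ha : 0 ≤ a) (hab : a ≤ b) (i : ι) :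
    u b i ≤ u a i + M * (b - a) := by
  have hB : ∀ x, HasDerivAt (fun y => u a i + M * (y - a)) M x := fun x => by
    simpa using ((hasDerivAt_id x).sub_const a).const_mul M |>.const_add (u a i)
  refine image_le_of_deriv_right_le_deriv_boundary (f := fun s => u s i)
    (fun x hx => (hu i x (ha.trans hx.1)).continuousWithinAt.mono
      (Icc_subset_Ici_self.trans (Ici_subset_Ici.2 ha)))
    (fun x hx => (hu i x (ha.trans hx.1)).mono (Ici_subset_Ici.2 (ha.trans hx.1)))
    (by simp) (fun x _ => (hB x).continuousAt.continuousWithinAt)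
    (fun x _ => (hB x).hasDerivWithinAt) (fun x hx => hM i x (ha.trans hx.1)) ⟨hab, le_rfl⟩

lemma le_mul_of_le_mul_of_deriv_le
    (hu : ∀ i t, 0 ≤ t → HasDerivWithinAt (fun s => u s i) (u' t i) (Ici 0) t)
    (hM : ∀ i t, 0 ≤ t → u' t i ≤ M)
    (hL : ∀ i t S, 0 ≤ t → (∀ j, u t j ≤ S) → u' t i ≤ L * (S - u t i))
    {ε η a : ℝ} (hη : |L| * |M| * η < ε) (ha : 0 ≤ a) (hua : ∀ j, u a j ≤ ε * a) {t : ℝ}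
    (ht : t ∈ Icc a (a + η)) (i : ι) :
    u t i ≤ ε * t := by
  have hB : ∀ x, HasDerivAt (fun y => ε * y) ε x := fun x => by
    simpa using (hasDerivAt_id x).const_mul ε
  refine image_le_of_deriv_right_lt_deriv_boundary (f := fun s => u s i) (f' := fun s => u' s i)
    (fun x hx => (hu i x (ha.trans hx.1)).continuousWithinAt.mono
      (Icc_subset_Ici_self.trans (Ici_subset_Ici.2 ha)))
    (fun x hx => (hu i x (ha.trans hx.1)).mono (Ici_subset_Ici.2 (ha.trans hx.1)))
    (hua i) hB ?_ ht
  intro x hx hux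
  have hS : ∀ j, u x j ≤ ε * a + |M| * η := fun j => by
    have := le_add_mul_sub_of_deriv_le hu hM ha hx.1 j
    have : M * (x - a) ≤ |M| * η :=
      (mul_le_mul_of_nonneg_right (le_abs_self M) (by linarith [hx.1])).trans
        (mul_le_mul_of_nonneg_left (by linarith [hx.2]) (abs_nonneg M))
    linarith [hua j]
  have hgap : ε * a + |M| * η - u x i ≤ |M| * η := by
    have hε : 0 < ε := lt_of_le_of_lt (mul_nonneg (by positivity) (by linarith [hx.1, hx.2])) hη
    rw [hux]; nlinarith [hx.1]
  calc u' x i ≤ L * (ε * a + |M| * η - u x i) := hL i x _ (ha.trans hx.1) hS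
    _ ≤ |L| * (ε * a + |M| * η - u x i) :=
        mul_le_mul_of_nonneg_right (le_abs_self L) (by linarith [hS i])
    _ ≤ |L| * (|M| * η) := mul_le_mul_of_nonneg_left hgap (abs_nonneg L)
    _ < ε := by linarith

lemma le_mul_of_deriv_le
    (hu : ∀ i t, 0 ≤ t → HasDerivWithinAt (fun s => u s i) (u' t i) (Ici 0) t)
    (hM : ∀ i t, 0 ≤ t → u' t i ≤ M)
    (hL : ∀ i t S, 0 ≤ t → (∀ j, u t j ≤ S) → u' t i ≤ L * (S - u t i))
    (h₀ : ∀ i, u 0 i ≤ 0) {ε : ℝ} (hε : 0 < ε) {t : ℝ} (ht : 0 ≤ t) (i : ι) :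
    u t i ≤ ε * t := by
  set η := ε / (|L| * |M| + 1)
  have hη : 0 < η := by positivity
  have hLMη : |L| * |M| * η < ε := by
    rw [mul_div_assoc', div_lt_iff₀ (by positivity)]
    nlinarith [mul_nonneg (abs_nonneg L) (abs_nonneg M)]
  have hsteps : ∀ n : ℕ, ∀ s ∈ Icc 0 (n * η), ∀ j, u s j ≤ ε * s := by
    intro n
    induction n with
    | zero =>
      intro s hs j
      obtain rfl : s = 0 := le_antisymm (by simpa using hs.2) hs.1
      simpa using h₀ j
    | succ n ih =>
      intro s hs j
      rcases le_total s (n * η) with hsn | hns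
      · exact ih s ⟨hs.1, hsn⟩ j
      · refine le_mul_of_le_mul_of_deriv_le hu hM hL hLMη (by positivity)
          (ih _ ⟨by positivity, le_rfl⟩) ⟨hns, ?_⟩ j
        simpa [add_mul] using hs.2
  obtain ⟨n, hn⟩ := exists_nat_ge (t / η)
  exact hsteps n t ⟨ht, (div_le_iff₀ hη).1 hn⟩ i

theorem nonpos_of_deriv_le_mul_upperBound_sub {B : ℝ}
    (hu : ∀ i t, 0 ≤ t → HasDerivWithinAt (fun s => u s i) (u' t i) (Ici 0) t)
    (hB : ∀ i t, 0 ≤ t → |u t i| ≤ B)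
    (hL : ∀ i t S, 0 ≤ t → (∀ j, u t j ≤ S) → u' t i ≤ L * (S - u t i))
    (h₀ : ∀ i, u 0 i ≤ 0) {t : ℝ} (ht : 0 ≤ t) (i : ι) : u t i ≤ 0 := by
  have hM : ∀ i t, 0 ≤ t → u' t i ≤ |L| * (2 * B) := fun i t ht => by
    have hu_le : ∀ j, u t j ≤ B := fun j => (le_abs_self _).trans (hB j t ht)
    have hu_ge : -B ≤ u t i := neg_le_of_abs_le (hB i t ht)
    calc u' t i ≤ L * (B - u t i) := hL i t B ht hu_le
      _ ≤ |L| * (B - u t i) := mul_le_mul_of_nonneg_right (le_abs_self L) (by linarith [hu_le i])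
      _ ≤ |L| * (2 * B) := mul_le_mul_of_nonneg_left (by linarith) (abs_nonneg L)
  refine le_of_forall_pos_le_add fun ε hε => ?_
  calc u t i ≤ ε / (t + 1) * t := le_mul_of_deriv_le hu hM hL h₀ (by positivity) ht i
    _ ≤ 0 + ε := by
      rw [zero_add, div_mul_eq_mul_div, div_le_iff₀ (by positivity)]; linarith

end ComparisonPrinciple

lemma mcfRHS_eq_mcfRHSOfSlopes (c d : ℝ) (Γ : ℤ → ℝ) (j : ℤ) :
    mcfRHS c d Γ j = mcfRHSOfSlopes d (Γ (j + 1) - Γ j) (Γ j - Γ (j - 1)) + c - 2 * d := by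
  simp only [mcfRHSOfSlopes, mcfBeta_sq]
  rw [mcfRHS, mcfBeta]
  ring

lemma mcfRHS_sub_mcfRHS_le {c d δ y : ℝ} {Γ Γ' : ℤ → ℝ} (hδ : δ ≤ 1 / 4) (hdδ : |d| * δ ≤ 1 / 4)
    (hΓ : ∀ j, |Γ (j + 1) - Γ j| ≤ δ) (hΓ' : ∀ j, |Γ' (j + 1) - Γ' j| ≤ δ) {k : ℤ} (hy : 0 ≤ y)
    (hnext : Γ (k + 1) - Γ' (k + 1) - (Γ k - Γ' k) ≤ y)
    (hprev : Γ (k - 1) - Γ' (k - 1) - (Γ k - Γ' k) ≤ y) :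
    mcfRHS c d Γ k - mcfRHS c d Γ' k ≤ 6 * y := by
  have hback : ∀ {Γ : ℤ → ℝ}, (∀ j, |Γ (j + 1) - Γ j| ≤ δ) → |Γ k - Γ (k - 1)| ≤ δ :=
    fun hΓ => by simpa using hΓ (k - 1)
  obtain ⟨κ₁, hκ₁, hκ₁', h₁⟩ := exists_mcfRHSOfSlopes_sub_eq_mul (q := Γ k - Γ (k - 1))
    hδ hdδ (hΓ' k) (hΓ k) (hback hΓ)
  obtain ⟨κ₂, hκ₂, hκ₂', h₂⟩ := exists_mcfRHSOfSlopes_sub_eq_mul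
    (p := -(Γ' k - Γ' (k - 1))) (P := -(Γ k - Γ (k - 1))) (q := -(Γ' (k + 1) - Γ' k))
    hδ hdδ (by rw [abs_neg]; exact hback hΓ') (by rw [abs_neg]; exact hback hΓ)
    (by rw [abs_neg]; exact hΓ' k)
  rw [mcfRHSOfSlopes_neg_swap, mcfRHSOfSlopes_neg_swap] at h₂
  rw [mcfRHS_eq_mcfRHSOfSlopes, mcfRHS_eq_mcfRHSOfSlopes]
  have hnext' : κ₁ * (Γ (k + 1) - Γ k - (Γ' (k + 1) - Γ' k)) ≤ 3 * y := by nlinarith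
  have hprev' : κ₂ * (-(Γ k - Γ (k - 1)) - -(Γ' k - Γ' (k - 1))) ≤ 3 * y := by nlinarith
  linarith

theorem discrete_mean_curvature_comparison (c d : ℝ) :
    ∃ δ : ℝ, 0 < δ ∧ ∀ Γm Γp : ℝ → ℤ → ℝ,
      -- Γ⁻ and Γ⁺ take values in ℓ^∞(ℤ)
      (∃ B : ℝ, ∀ t : ℝ, 0 ≤ t → ∀ j : ℤ, |Γm t j| ≤ B) →
      (∃ B : ℝ, ∀ t : ℝ, 0 ≤ t → ∀ j : ℤ, |Γp t j| ≤ B) →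
      -- (a): Γ⁻ is a C¹ sub-solution
      (∀ j : ℤ, ∀ t : ℝ, 0 ≤ t → ∃ D : ℝ,
        HasDerivWithinAt (fun s => Γm s j) D (Set.Ici (0 : ℝ)) t ∧ D ≤ mcfRHS c d (Γm t) j) →
      -- (b): Γ⁺ is a C¹ super-solution
      (∀ j : ℤ, ∀ t : ℝ, 0 ≤ t → ∃ D : ℝ,
        HasDerivWithinAt (fun s => Γp s j) D (Set.Ici (0 : ℝ)) t ∧ mcfRHS c d (Γp t) j ≤ D) →
      -- (c): uniform gradient bounds
      (∀ t : ℝ, 0 ≤ t → ∀ j : ℤ, |Γm t (j + 1) - Γm t j| ≤ δ) →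
      (∀ t : ℝ, 0 ≤ t → ∀ j : ℤ, |Γp t (j + 1) - Γp t j| ≤ δ) →
      -- (d): ordered initial data
      (∀ j : ℤ, Γm 0 j ≤ Γp 0 j) →
      ∀ t : ℝ, 0 ≤ t → ∀ j : ℤ, Γm t j ≤ Γp t j := by
  refine ⟨1 / (4 * (|d| + 1)), by positivity, ?_⟩
  intro Γm Γp ⟨Bm, hBm⟩ ⟨Bp, hBp⟩ hsub hsup hm hp h₀ t ht j
  have hδ : 1 / (4 * (|d| + 1)) ≤ 1 / 4 := by gcongr; linarith [abs_nonneg d]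
  have hdδ : |d| * (1 / (4 * (|d| + 1))) ≤ 1 / 4 := by
    rw [mul_one_div, div_le_div_iff₀ (by positivity) (by norm_num)]; linarith
  choose! Dm hDm hDm_le using hsub
  choose! Dp hDp hDp_le using hsup
  refine sub_nonpos.1 (nonpos_of_deriv_le_mul_upperBound_sub (u := fun s k => Γm s k - Γp s k)
    (u' := fun s k => Dm k s - Dp k s) (L := 6)
    (fun k s hs => (hDm k s hs).sub (hDp k s hs))
    (fun k s hs => (abs_sub _ _).trans (add_le_add (hBm s hs k) (hBp s hs k)))
    (fun k s S hs hS => ?_) (fun k => sub_nonpos.2 (h₀ k)) ht j)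
  have := mcfRHS_sub_mcfRHS_le (c := c) hδ hdδ (hm s hs) (hp s hs)
    (k := k) (y := S - (Γm s k - Γp s k))
    (by linarith [hS k]) (by linarith [hS (k + 1)]) (by linarith [hS (k - 1)])
  linarith [hDm_le k s hs, hDp_le k s hs]

end
end
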